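/- arXiv:2103.04358 — 8 statements merged into one kernel-verified Lean document; each statement's English description precedes it below -/
import Mathlib

section
/- For every real s ≤ 3/2 there is a constant C_s > 0 (depending only on s) such that for all a ∈ ℝ and all (I,J,K) ∈ ℤ³ with a ≠ 0 or (I,J,K) ≠ (0,0,0), one has |E_{I,J,K}(f_{a,s})| ≤ C_s (a² + I² + J² + K²)^{s - 3/2}. -/
/-!
Up to sign, `E_{I,J,K}(f)` is the mixed third forward difference of `f` at the corner
`(2I, 2J, 2K)`, so three applications of the mean value theorem turn it into
`∂³f/∂x∂y∂z (p) = 8 s (s-1) (s-2) x y z (a² + |p|²)^(s-3)` at some point `p = (x, y, z)` of the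
cube. Since `|x y z| ≤ (a² + |p|²)^(3/2)`, this is at most `8 |s (s-1) (s-2)| (a² + |p|²)^(s-3/2)`,
and on the cube `a² + |p|² ≥ a² + I² + J² + K²`, which gives the bound because `s - 3/2 ≤ 0`.
-/

open scoped BigOperators

/-- `E_{I,J,K}(f)`: the alternating sum of `f` over the 8 corners of the cube
`Q_{2I,2J,2K} = [2I,2I+1] × [2J,2J+1] × [2K,2K+1]`. -/
noncomputable def Esum (f : ℝ × ℝ × ℝ → ℝ) (I J K : ℤ) : ℝ :=
  ∑ i ∈ Finset.Icc (2 * I) (2 * I + 1), ∑ j ∈ Finset.Icc (2 * J) (2 * J + 1),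
    ∑ k ∈ Finset.Icc (2 * K) (2 * K + 1),
      (-1 : ℝ) ^ (i + j + k) * f ((i : ℝ), (j : ℝ), (k : ℝ))

open Set
open scoped fwdDiff

noncomputable def mixedFwdDiff (F : ℝ → ℝ → ℝ → ℝ) (x y z : ℝ) : ℝ :=
  Δ_[1] (fun x => Δ_[1] (fun y => Δ_[1] (F x y) z) y) x

theorem exists_mem_Icc_fwdDiff_eq_of_hasDerivAt {g g' : ℝ → ℝ} {b : ℝ}
    (hg : ∀ t ∈ Icc b (b + 1), HasDerivAt g (g' t) t) :
    ∃ t ∈ Icc b (b + 1), Δ_[1] g b = g' t := by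
  obtain ⟨t, ht, hslope⟩ := exists_hasDerivAt_eq_slope g g' (lt_add_one b)
    (fun t ht => (hg t ht).continuousAt.continuousWithinAt)
    (fun t ht => hg t (Ioo_subset_Icc_self ht))
  refine ⟨t, Ioo_subset_Icc_self ht, ?_⟩
  rw [hslope, add_sub_cancel_left, div_one]
  rfl

theorem exists_mem_cube_mixedFwdDiff_eq {F Fx Fxy Fxyz : ℝ → ℝ → ℝ → ℝ} {x₀ y₀ z₀ : ℝ}
    (hx : ∀ x ∈ Icc x₀ (x₀ + 1), ∀ y ∈ Icc y₀ (y₀ + 1), ∀ z ∈ Icc z₀ (z₀ + 1),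
      HasDerivAt (fun x => F x y z) (Fx x y z) x)
    (hy : ∀ x ∈ Icc x₀ (x₀ + 1), ∀ y ∈ Icc y₀ (y₀ + 1), ∀ z ∈ Icc z₀ (z₀ + 1),
      HasDerivAt (fun y => Fx x y z) (Fxy x y z) y)
    (hz : ∀ x ∈ Icc x₀ (x₀ + 1), ∀ y ∈ Icc y₀ (y₀ + 1), ∀ z ∈ Icc z₀ (z₀ + 1),
      HasDerivAt (Fxy x y) (Fxyz x y z) z) :
    ∃ x ∈ Icc x₀ (x₀ + 1), ∃ y ∈ Icc y₀ (y₀ + 1), ∃ z ∈ Icc z₀ (z₀ + 1),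
      mixedFwdDiff F x₀ y₀ z₀ = Fxyz x y z := by
  have left_mem (b : ℝ) : b ∈ Icc b (b + 1) := left_mem_Icc.2 (by linarith)
  have right_mem (b : ℝ) : b + 1 ∈ Icc b (b + 1) := right_mem_Icc.2 (by linarith)
  obtain ⟨x, hxm, ex⟩ := exists_mem_Icc_fwdDiff_eq_of_hasDerivAt
    (g := fun x => Δ_[1] (fun y => Δ_[1] (F x y) z₀) y₀) fun x hxm =>
      ((hx x hxm _ (right_mem _) _ (right_mem _)).sub (hx x hxm _ (right_mem _) _ (left_mem _))).sub
        ((hx x hxm _ (left_mem _) _ (right_mem _)).sub (hx x hxm _ (left_mem _) _ (left_mem _)))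
  obtain ⟨y, hym, ey⟩ := exists_mem_Icc_fwdDiff_eq_of_hasDerivAt
    (g := fun y => Δ_[1] (Fx x y) z₀) fun y hym =>
      (hy x hxm y hym _ (right_mem _)).sub (hy x hxm y hym _ (left_mem _))
  obtain ⟨z, hzm, ez⟩ := exists_mem_Icc_fwdDiff_eq_of_hasDerivAt (hz x hxm y hym)
  exact ⟨x, hxm, y, hym, z, hzm, ex.trans (ey.trans ez)⟩

theorem Esum_eq_neg_mixedFwdDiff (f : ℝ × ℝ × ℝ → ℝ) (I J K : ℤ) :
    Esum f I J K = -mixedFwdDiff (fun x y z => f (x, y, z)) (2 * I) (2 * J) (2 * K) := by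
  have hIcc (n : ℤ) : Finset.Icc (2 * n) (2 * n + 1) = {2 * n, 2 * n + 1} := by
    ext m; simp only [Finset.mem_Icc, Finset.mem_insert, Finset.mem_singleton]; omega
  have hsign (i j k : ℤ) : (-1 : ℝ) ^ (i + j + k) = (-1) ^ i * (-1) ^ j * (-1) ^ k := by
    rw [zpow_add₀ (by norm_num), zpow_add₀ (by norm_num)]
  have heven (n : ℤ) : (-1 : ℝ) ^ (2 * n) = 1 := by rw [zpow_mul]; norm_num
  have hodd (n : ℤ) : (-1 : ℝ) ^ (2 * n + 1) = -1 := by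
    rw [zpow_add_one₀ (by norm_num), heven, one_mul]
  simp only [Esum, hIcc, Finset.sum_pair (show 2 * I ≠ 2 * I + 1 by omega),
    Finset.sum_pair (show 2 * J ≠ 2 * J + 1 by omega),
    Finset.sum_pair (show 2 * K ≠ 2 * K + 1 by omega), hsign, heven, hodd, mixedFwdDiff,
    fwdDiff]
  push_cast
  ring

theorem hasDerivAt_rpow_of_forall_eq_add_sq {q : ℝ → ℝ} {B t : ℝ} (hq : ∀ u, q u = B + u ^ 2)
    (hpos : 0 < q t) (e : ℝ) :
    HasDerivAt (fun u => q u ^ e) (2 * e * t * q t ^ (e - 1)) t := by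
  have hq' : HasDerivAt q (2 * t) t := by
    rw [show q = fun u => B + u ^ 2 from funext hq]
    simpa using (hasDerivAt_pow 2 t).const_add B
  convert hq'.rpow_const (p := e) (Or.inl hpos.ne') using 1
  ring

theorem exists_mixedFwdDiff_rpow_eq (a s x₀ y₀ z₀ : ℝ)
    (hpos : ∀ x ∈ Icc x₀ (x₀ + 1), ∀ y ∈ Icc y₀ (y₀ + 1), ∀ z ∈ Icc z₀ (z₀ + 1),
      0 < a ^ 2 + x ^ 2 + y ^ 2 + z ^ 2) :
    ∃ x ∈ Icc x₀ (x₀ + 1), ∃ y ∈ Icc y₀ (y₀ + 1), ∃ z ∈ Icc z₀ (z₀ + 1),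
      mixedFwdDiff (fun x y z => (a ^ 2 + x ^ 2 + y ^ 2 + z ^ 2) ^ s) x₀ y₀ z₀ =
        8 * (s * (s - 1) * (s - 2)) * (x * y * z) * (a ^ 2 + x ^ 2 + y ^ 2 + z ^ 2) ^ (s - 3) := by
  obtain ⟨x, hx, y, hy, z, hz, h⟩ := exists_mem_cube_mixedFwdDiff_eq
    (Fx := fun x y z => 2 * s * x * (a ^ 2 + x ^ 2 + y ^ 2 + z ^ 2) ^ (s - 1))
    (Fxy := fun x y z =>
      2 * s * x * (2 * (s - 1) * y * (a ^ 2 + x ^ 2 + y ^ 2 + z ^ 2) ^ (s - 1 - 1)))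
    (Fxyz := fun x y z => 2 * s * x * (2 * (s - 1) * y *
      (2 * (s - 1 - 1) * z * (a ^ 2 + x ^ 2 + y ^ 2 + z ^ 2) ^ (s - 1 - 1 - 1))))
    (fun x hx y hy z hz => hasDerivAt_rpow_of_forall_eq_add_sq
      (q := fun x => a ^ 2 + x ^ 2 + y ^ 2 + z ^ 2) (B := a ^ 2 + y ^ 2 + z ^ 2)
      (fun _ => by ring) (hpos x hx y hy z hz) s)
    (fun x hx y hy z hz => (hasDerivAt_rpow_of_forall_eq_add_sq
      (q := fun y => a ^ 2 + x ^ 2 + y ^ 2 + z ^ 2) (B := a ^ 2 + x ^ 2 + z ^ 2)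
      (fun _ => by ring) (hpos x hx y hy z hz) (s - 1)).const_mul (2 * s * x))
    (fun x hx y hy z hz => ((hasDerivAt_rpow_of_forall_eq_add_sq
      (q := fun z => a ^ 2 + x ^ 2 + y ^ 2 + z ^ 2) (B := a ^ 2 + x ^ 2 + y ^ 2)
      (fun _ => by ring) (hpos x hx y hy z hz) (s - 1 - 1)).const_mul (2 * (s - 1) * y)).const_mul
      (2 * s * x))
  refine ⟨x, hx, y, hy, z, hz, h.trans ?_⟩
  rw [show s - 1 - 1 - 1 = s - 3 by ring]
  ring

theorem abs_mul_mul_mul_rpow_le {x y z R : ℝ} (hR : 0 < R) (hx : x ^ 2 ≤ R) (hy : y ^ 2 ≤ R)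
    (hz : z ^ 2 ≤ R) (e : ℝ) : |x * y * z| * R ^ e ≤ R ^ (e + 3 / 2) := by
  have hxyz : |x * y * z| ≤ R ^ (3 / 2 : ℝ) :=
    calc |x * y * z| = |x| * |y| * |z| := by rw [abs_mul, abs_mul]
      _ ≤ √R * √R * √R := by
        gcongr <;> exact Real.abs_le_sqrt ‹_›
      _ = R ^ (3 / 2 : ℝ) := by
        rw [Real.sqrt_eq_rpow, ← Real.rpow_add hR, ← Real.rpow_add hR]
        norm_num
  rw [Real.rpow_add hR, mul_comm (R ^ e)]
  gcongr

theorem abs_thirdMixedDeriv_rpow_le {a s x y z ρ : ℝ} (hs : s ≤ 3 / 2) (hρ : 0 < ρ)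
    (hρR : ρ ≤ a ^ 2 + x ^ 2 + y ^ 2 + z ^ 2) :
    |8 * (s * (s - 1) * (s - 2)) * (x * y * z) * (a ^ 2 + x ^ 2 + y ^ 2 + z ^ 2) ^ (s - 3)| ≤
      8 * (|s| * |s - 1| * |s - 2|) * ρ ^ (s - 3 / 2) := by
  set R := a ^ 2 + x ^ 2 + y ^ 2 + z ^ 2
  have hR : 0 < R := hρ.trans_le hρR
  have hxR : x ^ 2 ≤ R := by linarith [sq_nonneg a, sq_nonneg y, sq_nonneg z]
  have hyR : y ^ 2 ≤ R := by linarith [sq_nonneg a, sq_nonneg x, sq_nonneg z]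
  have hzR : z ^ 2 ≤ R := by linarith [sq_nonneg a, sq_nonneg x, sq_nonneg y]
  calc |8 * (s * (s - 1) * (s - 2)) * (x * y * z) * R ^ (s - 3)|
      = 8 * (|s| * |s - 1| * |s - 2|) * (|x * y * z| * R ^ (s - 3)) := by
        rw [abs_mul, abs_mul, abs_of_pos (Real.rpow_pos_of_pos hR _)]
        simp only [abs_mul, abs_of_pos (by norm_num : (0 : ℝ) < 8)]
        ring
    _ ≤ 8 * (|s| * |s - 1| * |s - 2|) * R ^ (s - 3 + 3 / 2) := by
        gcongr
        exact abs_mul_mul_mul_rpow_le hR hxR hyR hzR (s - 3)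
    _ ≤ 8 * (|s| * |s - 1| * |s - 2|) * ρ ^ (s - 3 / 2) := by
        rw [show s - 3 + 3 / 2 = s - 3 / 2 by ring]
        exact mul_le_mul_of_nonneg_left (Real.rpow_le_rpow_of_nonpos hρ hρR (by linarith))
          (by positivity)

theorem sq_le_sq_of_mem_Icc_two_mul {n : ℤ} {x : ℝ} (hx : x ∈ Icc (2 * (n : ℝ)) (2 * n + 1)) :
    (n : ℝ) ^ 2 ≤ x ^ 2 := by
  obtain ⟨h₁, h₂⟩ := hx
  rcases le_or_gt 0 n with hn | hn
  · have hn' : (0 : ℝ) ≤ n := by exact_mod_cast hn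
    nlinarith
  · have hn' : (n : ℝ) ≤ -1 := by exact_mod_cast (by omega : n ≤ -1)
    nlinarith

theorem sq_add_sq_add_sq_add_sq_pos {a : ℝ} {I J K : ℤ} (h : a ≠ 0 ∨ (I, J, K) ≠ (0, 0, 0)) :
    0 < a ^ 2 + (I : ℝ) ^ 2 + (J : ℝ) ^ 2 + (K : ℝ) ^ 2 := by
  rcases h with ha | hIJK
  · positivity
  · simp only [ne_eq, Prod.mk.injEq, not_and_or] at hIJK
    rcases hIJK with hI | hJ | hK
    · have : (I : ℝ) ≠ 0 := by exact_mod_cast hI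
      positivity
    · have : (J : ℝ) ≠ 0 := by exact_mod_cast hJ
      positivity
    · have : (K : ℝ) ≠ 0 := by exact_mod_cast hK
      positivity

/-- For every `s ≤ 3/2` there is `C_s > 0` such that for all `a ∈ ℝ` and `(I,J,K) ∈ ℤ³`
(with `a ≠ 0` or `(I,J,K) ≠ 0`), `|E_{I,J,K}(f_{a,s})| ≤ C_s (a² + I² + J² + K²)^{s - 3/2}`,
where `f_{a,s}(x) = (a² + |x|²)^s`. -/
theorem abs_Esum_pow_kernel_le (s : ℝ) (hs : s ≤ 3 / 2) :
    ∃ C > 0, ∀ (a : ℝ) (I J K : ℤ), (a ≠ 0 ∨ (I, J, K) ≠ ((0 : ℤ), (0 : ℤ), (0 : ℤ))) →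
      |Esum (fun p : ℝ × ℝ × ℝ => (a ^ 2 + p.1 ^ 2 + p.2.1 ^ 2 + p.2.2 ^ 2) ^ s) I J K| ≤
        C * (a ^ 2 + (I : ℝ) ^ 2 + (J : ℝ) ^ 2 + (K : ℝ) ^ 2) ^ (s - 3 / 2) := by
  refine ⟨8 * (|s| * |s - 1| * |s - 2|) + 1, by positivity, fun a I J K h => ?_⟩
  set ρ := a ^ 2 + (I : ℝ) ^ 2 + (J : ℝ) ^ 2 + (K : ℝ) ^ 2
  have hρ : 0 < ρ := sq_add_sq_add_sq_add_sq_pos h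
  have hρ_le : ∀ x ∈ Icc (2 * (I : ℝ)) (2 * I + 1), ∀ y ∈ Icc (2 * (J : ℝ)) (2 * J + 1),
      ∀ z ∈ Icc (2 * (K : ℝ)) (2 * K + 1), ρ ≤ a ^ 2 + x ^ 2 + y ^ 2 + z ^ 2 :=
    fun x hx y hy z hz => by
      linarith [sq_le_sq_of_mem_Icc_two_mul hx, sq_le_sq_of_mem_Icc_two_mul hy,
        sq_le_sq_of_mem_Icc_two_mul hz]
  obtain ⟨x, hx, y, hy, z, hz, hE⟩ := exists_mixedFwdDiff_rpow_eq a s _ _ _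
    fun x hx y hy z hz => hρ.trans_le (hρ_le x hx y hy z hz)
  rw [Esum_eq_neg_mixedFwdDiff, abs_neg, hE]
  calc _ ≤ 8 * (|s| * |s - 1| * |s - 2|) * ρ ^ (s - 3 / 2) :=
        abs_thirdMixedDeriv_rpow_le hs hρ (hρ_le x hx y hy z hz)
    _ ≤ (8 * (|s| * |s - 1| * |s - 2|) + 1) * ρ ^ (s - 3 / 2) := by
        gcongr
        linarith
end

section
/- Let a ∈ ℝ and s > 0, and let (I,J,K) ∈ ℤ³ with I ≥ 0, J ≥ 0, K ≥ 0, and assume a ≠ 0 or (I,J,K) ≠ (0,0,0). Then E_{I,J,K}(f_{a,-s}) ≥ 0; that is, the block sums of the alternating lattice series with terms (a²+i²+j²+k²)^{-s} are sign-definite in the octant I,J,K ≥ 0. -/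
open scoped BigOperators

/-!
Put `b = a² + (2I)² + (2J)² + (2K)²` and `p = 4I + 1`, `q = 4J + 1`, `r = 4K + 1`. Since
`(2n + 1)² = (2n)² + (4n + 1)`, the corner values are `(b + εp + δq + ηr)^(-s)` with
`ε, δ, η ∈ {0, 1}`, so `E_{I,J,K}` is minus the third mixed difference `Δ_p Δ_q Δ_r` of
`x ↦ x^(-s)` at `b`. A function with monotone derivative has antitone differences
`g t - g (t + q)`; as `x ↦ e x^(e-1)` is monotone for `e < 0`, this applies first to `x^(-s-1)`
and then to `Δ_r x^(-s)`, so `t ↦ Δ_q Δ_r (b + t)^(-s)` is antitone, and comparing `t = 0` with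
`t = p` gives the sign.
-/

open Set

lemma antitoneOn_sub_comp_add_of_monotoneOn_deriv {g g' : ℝ → ℝ} {c q : ℝ}
    (hg : ∀ t ∈ Ici c, HasDerivAt g (g' t) t) (hg' : MonotoneOn g' (Ici c)) (hq : 0 ≤ q) :
    AntitoneOn (fun t => g t - g (t + q)) (Ici c) := by
  have hshift : ∀ t ∈ Ici c, t + q ∈ Ici c := fun t ht => le_add_of_le_of_nonneg ht hq
  have hderiv : ∀ t ∈ Ici c, HasDerivAt (fun t => g t - g (t + q)) (g' t - g' (t + q)) t :=
    fun t ht => (hg t ht).sub ((hg _ (hshift t ht)).comp_add_const t q)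
  refine antitoneOn_of_hasDerivWithinAt_nonpos (convex_Ici c)
    (fun t ht => (hderiv t ht).continuousAt.continuousWithinAt)
    (fun t ht => (hderiv t (interior_subset ht)).hasDerivWithinAt) fun t ht => ?_
  have ht := interior_subset ht
  exact sub_nonpos.2 (hg' ht (hshift t ht) (le_add_of_nonneg_right hq))

lemma hasDerivAt_add_rpow {b e t : ℝ} (h : 0 < b + t) :
    HasDerivAt (fun u => (b + u) ^ e) (e * (b + t) ^ (e - 1)) t := by
  simpa using ((hasDerivAt_id t).const_add b).rpow_const (p := e) (Or.inl h.ne')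

lemma antitoneOn_rpow_sub_rpow_add {b e q : ℝ} (hb : 0 < b) (he : e < 0) (hq : 0 ≤ q) :
    AntitoneOn (fun t => (b + t) ^ e - (b + (t + q)) ^ e) (Ici 0) := by
  refine antitoneOn_sub_comp_add_of_monotoneOn_deriv (g := fun t => (b + t) ^ e)
    (fun t ht => hasDerivAt_add_rpow (by linarith [mem_Ici.1 ht])) ?_ hq
  intro x hx y hy hxy
  have hx : (0 : ℝ) < b + x := by linarith [mem_Ici.1 hx]
  exact mul_le_mul_of_nonpos_left
    (Real.rpow_le_rpow_of_nonpos hx (by linarith) (by linarith)) he.le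

lemma antitoneOn_second_difference_rpow {b e q r : ℝ} (hb : 0 < b) (he : e < 0)
    (hq : 0 ≤ q) (hr : 0 ≤ r) :
    AntitoneOn (fun t => ((b + t) ^ e - (b + (t + r)) ^ e)
      - ((b + (t + q)) ^ e - (b + (t + q + r)) ^ e)) (Ici 0) := by
  refine antitoneOn_sub_comp_add_of_monotoneOn_deriv
    (g := fun t => (b + t) ^ e - (b + (t + r)) ^ e)
    (g' := fun t => e * ((b + t) ^ (e - 1) - (b + (t + r)) ^ (e - 1))) (fun t ht => ?_) ?_ hq
  · have ht : 0 ≤ t := ht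
    rw [mul_sub]
    exact (hasDerivAt_add_rpow (by linarith)).sub
      ((hasDerivAt_add_rpow (by linarith)).comp_add_const t r)
  · intro x hx y hy hxy
    exact mul_le_mul_of_nonpos_left
      (antitoneOn_rpow_sub_rpow_add hb (by linarith) hr hx hy hxy) he.le

lemma third_difference_rpow_nonneg {b e p q r : ℝ} (hb : 0 < b) (he : e < 0)
    (hp : 0 ≤ p) (hq : 0 ≤ q) (hr : 0 ≤ r) :
    0 ≤ b ^ e - (b + p) ^ e - (b + q) ^ e - (b + r) ^ e
      + (b + p + q) ^ e + (b + p + r) ^ e + (b + q + r) ^ e - (b + p + q + r) ^ e := by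
  have h := antitoneOn_second_difference_rpow hb he hq hr (mem_Ici.2 le_rfl) (mem_Ici.2 hp) hp
  simp only [add_assoc, add_zero, zero_add] at h ⊢
  linarith

lemma Esum_eq (f : ℝ × ℝ × ℝ → ℝ) (I J K : ℤ) : Esum f I J K =
    f (2 * I, 2 * J, 2 * K) - f (2 * I + 1, 2 * J, 2 * K) - f (2 * I, 2 * J + 1, 2 * K)
      - f (2 * I, 2 * J, 2 * K + 1) + f (2 * I + 1, 2 * J + 1, 2 * K)
      + f (2 * I + 1, 2 * J, 2 * K + 1) + f (2 * I, 2 * J + 1, 2 * K + 1)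
      - f (2 * I + 1, 2 * J + 1, 2 * K + 1) := by
  have hne : ∀ n : ℤ, n ≠ n + 1 := fun n => by omega
  simp only [Esum, Int.Icc_eq_pair, Finset.sum_pair (hne _)]
  simp only [ne_eq, neg_eq_zero, one_ne_zero, not_false_eq_true, zpow_add₀, zpow_mul,
    zpow_ofNat, even_two, Even.neg_pow, one_pow, one_zpow, mul_one, Int.cast_mul, Int.cast_ofNat,
    one_mul, pow_one, mul_neg, Int.cast_add, Int.cast_one, neg_mul, neg_neg]
  ring

/-- For `a ∈ ℝ`, `s > 0` and `I, J, K ≥ 0` (with `a ≠ 0` or `(I,J,K) ≠ 0`), the block sums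
`E_{I,J,K}(f_{a,-s})` of the alternating lattice series with terms `(a²+i²+j²+k²)^{-s}` are
nonnegative: the block sums are sign-definite in the octant `I, J, K ≥ 0`. -/
theorem Esum_pow_kernel_nonneg (a s : ℝ) (hs : 0 < s) (I J K : ℤ)
    (hI : 0 ≤ I) (hJ : 0 ≤ J) (hK : 0 ≤ K)
    (h : a ≠ 0 ∨ (I, J, K) ≠ ((0 : ℤ), (0 : ℤ), (0 : ℤ))) :
    0 ≤ Esum (fun p : ℝ × ℝ × ℝ => (a ^ 2 + p.1 ^ 2 + p.2.1 ^ 2 + p.2.2 ^ 2) ^ (-s)) I J K := by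
  have hb : 0 < a ^ 2 + (2 * I : ℝ) ^ 2 + (2 * J : ℝ) ^ 2 + (2 * K : ℝ) ^ 2 := by
    rcases h with ha | hIJK
    · positivity
    · obtain hI0 | hJ0 | hK0 : I ≠ 0 ∨ J ≠ 0 ∨ K ≠ 0 := by
        simpa only [ne_eq, Prod.mk.injEq, not_and_or] using hIJK
      all_goals positivity
  have key := third_difference_rpow_nonneg hb (neg_lt_zero.2 hs)
    (p := 4 * I + 1) (q := 4 * J + 1) (r := 4 * K + 1)
    (by positivity) (by positivity) (by positivity)
  rw [Esum_eq]
  ring_nf at key ⊢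
  exact key
end

section
/- Let f : ℝ³ \ {0} → (0,∞) be continuous and suppose there is a constant C₂ > 0 such that C₂ · max_{x ∈ Q_{i,j,k}} f(x) ≤ min_{x ∈ Q_{i,j,k}} f(x) for every (i,j,k) ∈ ℤ³ whose unit cube Q_{i,j,k} does not contain 0. Then for every domain Ω ⊂ ℝ³ with 0 ∉ Ω, one has ∑_{p ∈ Ω_lat} f(p) ≤ (8/C₂) ∫_Ω f(x) dx, where Ω_lat := { p ∈ ℤ³ : there exists (I,J,K) ∈ ℤ³ with p ∈ Q_{I,J,K}, Q_{I,J,K} ⊆ Ω and 0 ∉ Q_{I,J,K} }. -/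
open scoped BigOperators ENNReal

/-- The closed unit cube `Q_{i,j,k} = [i,i+1] × [j,j+1] × [k,k+1] ⊂ ℝ³`. -/
def unitCube (i j k : ℤ) : Set (ℝ × ℝ × ℝ) :=
  Set.Icc ((i : ℝ), (j : ℝ), (k : ℝ)) ((i : ℝ) + 1, (j : ℝ) + 1, (k : ℝ) + 1)

/-!
Charge each lattice point `p ∈ Ω_lat` to `S p = Q ∩ B(p, 1/2)`, where `Q` is a unit cube witnessing
`p ∈ Ω_lat` and `B` is the ball of the sup metric of `ℝ × ℝ × ℝ`, i.e. a cube of side `1`. Each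
`S p` is an octant of `Q`, so it has volume `1/8`, and on it `f ≥ C₂ f(p)`; hence
`f(p) ≤ (8/C₂) ∫_{S p} f`. Balls of radius `1/2` about distinct lattice points meet in a null set,
so the `S p` are a.e. disjoint subsets of `Ω` and summing gives the bound.
-/

open MeasureTheory Set Metric
open scoped Function

lemma ENNReal.ofReal_le_mul_setLIntegral {α : Type*} [MeasurableSpace α] {μ : Measure α}
    {f : α → ℝ} {s : Set α} {x : α} {C N : ℝ} (hC : 0 < C) (hN : 0 < N)
    (hs : MeasurableSet s) (hμs : ENNReal.ofReal (1 / N) ≤ μ s)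
    (hf : ∀ y ∈ s, C * f x ≤ f y) :
    ENNReal.ofReal (f x) ≤ ENNReal.ofReal (N / C) * ∫⁻ y in s, ENNReal.ofReal (f y) ∂μ :=
  calc ENNReal.ofReal (f x)
      = ENNReal.ofReal (N / C) * (ENNReal.ofReal (C * f x) * ENNReal.ofReal (1 / N)) := by
        rw [← ENNReal.ofReal_mul' (by positivity), ← ENNReal.ofReal_mul (by positivity)]
        congr 1
        field_simp
    _ ≤ ENNReal.ofReal (N / C) * (ENNReal.ofReal (C * f x) * μ s) := by gcongr
    _ = ENNReal.ofReal (N / C) * ∫⁻ _ in s, ENNReal.ofReal (C * f x) ∂μ := by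
        rw [setLIntegral_const]
    _ ≤ ENNReal.ofReal (N / C) * ∫⁻ y in s, ENNReal.ofReal (f y) ∂μ :=
        mul_le_mul_right
          (setLIntegral_mono' hs fun y hy => ENNReal.ofReal_le_ofReal (hf y hy)) _

lemma Real.half_le_volume_Icc_inter_closedBall {a x : ℝ} (hx : x ∈ Icc a (a + 1)) :
    ENNReal.ofReal (1 / 2) ≤ volume (Icc a (a + 1) ∩ closedBall x (1 / 2)) := by
  rw [Real.closedBall_eq_Icc, Icc_inter_Icc, Real.volume_Icc]
  apply ENNReal.ofReal_le_ofReal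
  rw [le_sub_comm, max_le_iff, le_sub_iff_add_le, le_sub_iff_add_le, le_min_iff, le_min_iff]
  refine ⟨⟨?_, ?_⟩, ?_, ?_⟩ <;> linarith [hx.1, hx.2]

lemma Real.volume_closedBall_inter_closedBall_eq_zero {x y r : ℝ} (h : 2 * r ≤ dist x y) :
    volume (closedBall x r ∩ closedBall y r) = 0 := by
  rw [Real.closedBall_eq_Icc, Real.closedBall_eq_Icc, Icc_inter_Icc, Real.volume_Icc,
    ENNReal.ofReal_eq_zero, sub_nonpos]
  rw [Real.dist_eq] at h
  rcases le_total x y with hxy | hxy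
  · rw [abs_of_nonpos (sub_nonpos.2 hxy)] at h
    exact (min_le_left _ _).trans <| le_trans (by linarith) (le_max_right _ _)
  · rw [abs_of_nonneg (sub_nonneg.2 hxy)] at h
    exact (min_le_right _ _).trans <| le_trans (by linarith) (le_max_left _ _)

lemma volume_prod_prod (s t u : Set ℝ) :
    volume (s ×ˢ t ×ˢ u) = volume s * (volume t * volume u) := by
  rw [Measure.volume_eq_prod ℝ (ℝ × ℝ), Measure.prod_prod,
    Measure.volume_eq_prod ℝ ℝ, Measure.prod_prod]

lemma volume_prod_prod_inter_closedBall (s t u : Set ℝ) (x : ℝ × ℝ × ℝ) (r : ℝ) :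
    volume (s ×ˢ t ×ˢ u ∩ closedBall x r) =
      volume (s ∩ closedBall x.1 r) *
        (volume (t ∩ closedBall x.2.1 r) * volume (u ∩ closedBall x.2.2 r)) := by
  rw [← closedBall_prod_same, ← closedBall_prod_same, prod_inter_prod, prod_inter_prod,
    volume_prod_prod]

lemma unitCube_eq_prod (i j k : ℤ) :
    unitCube i j k = Icc (i : ℝ) (i + 1) ×ˢ Icc (j : ℝ) (j + 1) ×ˢ Icc (k : ℝ) (k + 1) := by
  rw [unitCube, Icc_prod_eq, Icc_prod_eq]

lemma measurableSet_unitCube (i j k : ℤ) : MeasurableSet (unitCube i j k) :=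
  measurableSet_Icc

lemma one_eighth_le_volume_unitCube_inter_closedBall {i j k : ℤ} {x : ℝ × ℝ × ℝ}
    (hx : x ∈ unitCube i j k) :
    ENNReal.ofReal (1 / 8) ≤ volume (unitCube i j k ∩ closedBall x (1 / 2)) := by
  rw [unitCube_eq_prod] at hx ⊢
  obtain ⟨hi, hj, hk⟩ := hx
  rw [volume_prod_prod_inter_closedBall]
  calc ENNReal.ofReal (1 / 8)
      = ENNReal.ofReal (1 / 2) * (ENNReal.ofReal (1 / 2) * ENNReal.ofReal (1 / 2)) := by
        rw [← ENNReal.ofReal_mul (by norm_num), ← ENNReal.ofReal_mul (by norm_num)]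
        norm_num
    _ ≤ _ := by
        gcongr <;> exact Real.half_le_volume_Icc_inter_closedBall ‹_›

def latticePoint (p : ℤ × ℤ × ℤ) : ℝ × ℝ × ℝ := ((p.1 : ℝ), (p.2.1 : ℝ), (p.2.2 : ℝ))

lemma aedisjoint_closedBall_latticePoint {p q : ℤ × ℤ × ℤ} (h : p ≠ q) :
    AEDisjoint volume (closedBall (latticePoint p) (1 / 2))
      (closedBall (latticePoint q) (1 / 2)) := by
  have hball : ∀ {m n : ℤ}, m ≠ n →
      volume (closedBall (m : ℝ) (1 / 2) ∩ closedBall (n : ℝ) (1 / 2)) = 0 := fun hmn =>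
    Real.volume_closedBall_inter_closedBall_eq_zero <| by
      rw [Int.dist_cast_real]; linarith [Int.pairwise_one_le_dist hmn]
  unfold AEDisjoint
  rw [← closedBall_prod_same, ← closedBall_prod_same, volume_prod_prod_inter_closedBall]
  obtain ⟨p₁, p₂, p₃⟩ := p
  obtain ⟨q₁, q₂, q₃⟩ := q
  simp only [latticePoint, ne_eq, Prod.mk.injEq, not_and_or] at h ⊢
  rcases h with h | h | h <;> simp only [hball h, zero_mul, mul_zero]

theorem lattice_sum_le_integral_general (f : ℝ × ℝ × ℝ → ℝ)
    (C₂ : ℝ) (hC₂ : 0 < C₂)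
    (hreg : ∀ i j k : ℤ, (0 : ℝ × ℝ × ℝ) ∉ unitCube i j k →
      ∀ x ∈ unitCube i j k, ∀ y ∈ unitCube i j k, C₂ * f x ≤ f y)
    (Ω : Set (ℝ × ℝ × ℝ)) :
    (∑' p : {p : ℤ × ℤ × ℤ // ∃ I J K : ℤ,
        (((p.1 : ℝ), (p.2.1 : ℝ), (p.2.2 : ℝ)) ∈ unitCube I J K ∧
          unitCube I J K ⊆ Ω ∧ (0 : ℝ × ℝ × ℝ) ∉ unitCube I J K)},
        ENNReal.ofReal (f (((p : ℤ × ℤ × ℤ).1 : ℝ), ((p : ℤ × ℤ × ℤ).2.1 : ℝ),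
          ((p : ℤ × ℤ × ℤ).2.2 : ℝ)))) ≤
      ENNReal.ofReal (8 / C₂) * ∫⁻ x in Ω, ENNReal.ofReal (f x) := by
  choose I J K hmem hsub hnz using fun p : {p : ℤ × ℤ × ℤ // ∃ I J K : ℤ,
      latticePoint p ∈ unitCube I J K ∧ unitCube I J K ⊆ Ω ∧ (0 : ℝ × ℝ × ℝ) ∉ unitCube I J K} =>
    p.2
  set S := fun p => unitCube (I p) (J p) (K p) ∩ closedBall (latticePoint p) (1 / 2)
  have hS : ∀ p, MeasurableSet (S p) := fun p =>
    (measurableSet_unitCube _ _ _).inter measurableSet_closedBall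
  have hdisj : Pairwise (AEDisjoint volume on S) := fun p q hpq =>
    (aedisjoint_closedBall_latticePoint (Subtype.coe_injective.ne hpq)).mono
      inter_subset_right inter_subset_right
  calc _ ≤ ∑' p, ENNReal.ofReal (8 / C₂) * ∫⁻ x in S p, ENNReal.ofReal (f x) :=
        ENNReal.tsum_le_tsum fun p => ENNReal.ofReal_le_mul_setLIntegral hC₂ (by norm_num) (hS p)
          (one_eighth_le_volume_unitCube_inter_closedBall (hmem p))
          fun y hy => hreg _ _ _ (hnz p) _ (hmem p) y hy.1
    _ = ENNReal.ofReal (8 / C₂) * ∫⁻ x in ⋃ p, S p, ENNReal.ofReal (f x) := by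
        rw [ENNReal.tsum_mul_left, lintegral_iUnion₀ (fun p => (hS p).nullMeasurableSet) hdisj]
    _ ≤ ENNReal.ofReal (8 / C₂) * ∫⁻ x in Ω, ENNReal.ofReal (f x) :=
        mul_le_mul_right (lintegral_mono_set <| iUnion_subset fun p =>
          inter_subset_left.trans (hsub p)) _

/-- Lemma on comparison of lattice sums with integrals: if `f` is continuous and positive
away from `0` and `C₂ · max_{Q_{i,j,k}} f ≤ min_{Q_{i,j,k}} f` on every integer unit cube
avoiding the origin, then for every domain `Ω` with `0 ∉ Ω`,
`∑_{p ∈ Ω_lat} f(p) ≤ (8/C₂) ∫_Ω f dx`, where `Ω_lat` is the set of lattice points contained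
in some integer unit cube lying in `Ω` and avoiding the origin. -/
theorem lattice_sum_le_integral (f : ℝ × ℝ × ℝ → ℝ)
    (hcont : ContinuousOn f {(0 : ℝ × ℝ × ℝ)}ᶜ)
    (hpos : ∀ x : ℝ × ℝ × ℝ, x ≠ 0 → 0 < f x)
    (C₂ : ℝ) (hC₂ : 0 < C₂)
    (hreg : ∀ i j k : ℤ, (0 : ℝ × ℝ × ℝ) ∉ unitCube i j k →
      ∀ x ∈ unitCube i j k, ∀ y ∈ unitCube i j k, C₂ * f x ≤ f y)
    (Ω : Set (ℝ × ℝ × ℝ)) (hΩopen : IsOpen Ω) (hΩconn : IsConnected Ω)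
    (h0 : (0 : ℝ × ℝ × ℝ) ∉ Ω) :
    (∑' p : {p : ℤ × ℤ × ℤ // ∃ I J K : ℤ,
        (((p.1 : ℝ), (p.2.1 : ℝ), (p.2.2 : ℝ)) ∈ unitCube I J K ∧
          unitCube I J K ⊆ Ω ∧ (0 : ℝ × ℝ × ℝ) ∉ unitCube I J K)},
        ENNReal.ofReal (f (((p : ℤ × ℤ × ℤ).1 : ℝ), ((p : ℤ × ℤ × ℤ).2.1 : ℝ),
          ((p : ℤ × ℤ × ℤ).2.2 : ℝ)))) ≤
      ENNReal.ofReal (8 / C₂) * ∫⁻ x in Ω, ENNReal.ofReal (f x) :=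
  lattice_sum_le_integral_general f C₂ hC₂ hreg Ω
end

section
/- For every real s > -3/2 there is a constant C_s > 0 (depending only on s) such that for all a ∈ ℝ and all n ∈ ℕ with n ≥ 1, ∑_{(i,j,k) ∈ ℤ³ \ {0}, i²+j²+k² ≤ n} (a² + i² + j² + k²)^s ≤ C_s (a² + n)^{s + 3/2}. -/
/-!
Split the punctured ball into the sup-norm spheres `‖p‖∞ = M`, `1 ≤ M ≤ ⌊√n⌋`, each of which has
`24M² + 2 ≤ 26M²` points. For `s ≥ 0` every summand is at most `(a² + n)^s`. For `s < 0` a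
summand on the sphere of radius `M` is at most `M^(2s)`, and comparing `∑ M^(2s+2)` with
`∫ x^(2s+2) dx`, which converges at `0` exactly when `s > -3/2`, bounds the sum by a multiple of
`⌊√n⌋^(2s+3) ≤ (a² + n)^(s+3/2)`.
-/

open Finset

namespace LatticeBall

lemma sum_Icc_rpow_le_of_nonneg {t : ℝ} (ht : 0 ≤ t) (R : ℕ) :
    ∑ M ∈ Icc 1 R, (M : ℝ) ^ t ≤ (R : ℝ) ^ (t + 1) := by
  calc ∑ M ∈ Icc 1 R, (M : ℝ) ^ t ≤ #(Icc 1 R) • (R : ℝ) ^ t := by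
        refine sum_le_card_nsmul _ _ _ fun M hM => ?_
        gcongr
        exact_mod_cast (mem_Icc.mp hM).2
    _ = (R : ℝ) ^ (t + 1) := by
        rw [Nat.card_Icc, add_tsub_cancel_right, nsmul_eq_mul,
          Real.rpow_add_one' (Nat.cast_nonneg R) (by linarith), mul_comm]

lemma sum_Icc_rpow_le_of_nonpos {t : ℝ} (ht : -1 < t) (ht' : t ≤ 0) (R : ℕ) :
    ∑ M ∈ Icc 1 R, (M : ℝ) ^ t ≤ (R : ℝ) ^ (t + 1) / (t + 1) := by
  have ht1 : 0 < t + 1 := by linarith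
  obtain _ | K := R
  · simp [Real.zero_rpow ht1.ne']
  -- The term `M = 1` is split off: `x ^ t` is antitone only away from `0`, where `0 ^ t = 0`.
  have hanti : AntitoneOn (fun x : ℝ => x ^ t) (Set.Icc 1 (1 + K)) :=
    fun x hx y _ hxy => Real.rpow_le_rpow_of_nonpos (zero_lt_one.trans_le hx.1) hxy ht'
  have hint : ∫ x in (1 : ℝ)..1 + K, x ^ t = ((K + 1 : ℝ) ^ (t + 1) - 1) / (t + 1) := by
    rw [integral_rpow (Or.inl ht), Real.one_rpow, add_comm (1 : ℝ)]
  have htail := hanti.sum_le_integral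
  rw [hint, sub_div] at htail
  have hone : 1 ≤ 1 / (t + 1) := by rw [le_div_iff₀ ht1]; linarith
  rw [← Ico_add_one_right_eq_Icc, sum_Ico_eq_sum_range, Nat.add_sub_cancel, sum_range_succ']
  push_cast at htail ⊢
  simp only [Real.one_rpow]
  linarith

lemma sum_Icc_rpow_le {t : ℝ} (ht : -1 < t) (R : ℕ) :
    ∑ M ∈ Icc 1 R, (M : ℝ) ^ t ≤ max 1 (1 / (t + 1)) * (R : ℝ) ^ (t + 1) := by
  rcases le_total 0 t with ht' | ht'
  · exact (sum_Icc_rpow_le_of_nonneg ht' R).trans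
      (le_mul_of_one_le_left (by positivity) (le_max_left _ _))
  · calc ∑ M ∈ Icc 1 R, (M : ℝ) ^ t ≤ (R : ℝ) ^ (t + 1) / (t + 1) :=
          sum_Icc_rpow_le_of_nonpos ht ht' R
      _ = 1 / (t + 1) * (R : ℝ) ^ (t + 1) := (one_div_mul_eq_div _ _).symm
      _ ≤ max 1 (1 / (t + 1)) * (R : ℝ) ^ (t + 1) := by
          gcongr
          exact le_max_right _ _

def natSupNorm (p : ℤ × ℤ × ℤ) : ℕ := max p.1.natAbs (max p.2.1.natAbs p.2.2.natAbs)

lemma natSupNorm_eq_zero_iff {p : ℤ × ℤ × ℤ} : natSupNorm p = 0 ↔ p = 0 := by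
  simp [natSupNorm, Prod.ext_iff]

lemma natSupNorm_sq_le (p : ℤ × ℤ × ℤ) :
    (natSupNorm p : ℤ) ^ 2 ≤ p.1 ^ 2 + p.2.1 ^ 2 + p.2.2 ^ 2 := by
  have max_sq_le (x y : ℕ) : max x y ^ 2 ≤ x ^ 2 + y ^ 2 := by
    rcases le_total x y with h | h <;> simp [h]
  have h := (max_sq_le p.1.natAbs _).trans
    (Nat.add_le_add_left (max_sq_le p.2.1.natAbs p.2.2.natAbs) _)
  zify at h
  simpa only [natSupNorm, Nat.cast_max, Int.natCast_natAbs, sq_abs, add_assoc] using h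

lemma mem_Icc_neg_natCast_iff {p : ℤ × ℤ × ℤ} {R : ℕ} :
    p ∈ Icc (-R : ℤ × ℤ × ℤ) R ↔ natSupNorm p ≤ R := by
  simp only [mem_Icc, Prod.le_def, Prod.fst_neg, Prod.fst_natCast, Prod.snd_neg,
    Prod.snd_natCast, natSupNorm, sup_le_iff]
  omega

lemma mem_box_iff {p : ℤ × ℤ × ℤ} : ∀ {n : ℕ}, p ∈ box n ↔ natSupNorm p = n
  | 0 => by rw [box_zero, mem_singleton, natSupNorm_eq_zero_iff]
  | n + 1 => by
    rw [box_succ_eq_sdiff, mem_sdiff, mem_Icc_neg_natCast_iff, mem_Icc_neg_natCast_iff]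
    omega

lemma card_box_eq : ∀ {n : ℕ}, n ≠ 0 → #(box n : Finset (ℤ × ℤ × ℤ)) = 24 * n ^ 2 + 2
  | n + 1, _ => by
    simp_rw [Prod.card_box_succ, card_Icc_prod, Int.card_Icc]
    simp only [Prod.fst_neg, Prod.snd_neg, Prod.fst_natCast, Prod.snd_natCast, sub_neg_eq_add]
    norm_cast
    refine tsub_eq_of_eq_add ?_
    simp only [Nat.succ_eq_add_one]
    ring

lemma sum_le_of_le_comp_natSupNorm {T : Finset (ℤ × ℤ × ℤ)} {R : ℕ} {g : ℤ × ℤ × ℤ → ℝ} {c : ℕ → ℝ}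
    (hT : ∀ p ∈ T, natSupNorm p ∈ Icc 1 R) (hc : ∀ M, 0 ≤ c M)
    (hg : ∀ p ∈ T, g p ≤ c (natSupNorm p)) :
    ∑ p ∈ T, g p ≤ 26 * ∑ M ∈ Icc 1 R, (M : ℝ) ^ 2 * c M := by
  rw [← sum_fiberwise_of_maps_to hT, mul_sum]
  refine sum_le_sum fun M hM => ?_
  have hfiber : {p ∈ T | natSupNorm p = M} ⊆ box M :=
    fun p hp => mem_box_iff.2 (mem_filter.1 hp).2
  calc ∑ p ∈ T with natSupNorm p = M, g p ≤ #{p ∈ T | natSupNorm p = M} • c M :=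
        sum_le_card_nsmul _ _ _ fun p hp => (mem_filter.1 hp).2 ▸ hg p (mem_filter.1 hp).1
    _ ≤ #(box M : Finset (ℤ × ℤ × ℤ)) • c M := nsmul_le_nsmul_left (hc M) (card_le_card hfiber)
    _ ≤ 26 * ((M : ℝ) ^ 2 * c M) := by
        have hM1 : 1 ≤ M := (mem_Icc.1 hM).1
        rw [card_box_eq (by omega), nsmul_eq_mul]
        push_cast
        have hM2 : (1 : ℝ) ≤ M ^ 2 := one_le_pow₀ (by exact_mod_cast hM1)
        nlinarith [mul_le_mul_of_nonneg_right hM2 (hc M)]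

lemma natSqrt_rpow_two_mul_le {u : ℝ} (hu : 0 ≤ u) (a : ℝ) (n : ℕ) :
    (n.sqrt : ℝ) ^ (2 * u) ≤ (a ^ 2 + n) ^ u := by
  rw [show (2 : ℝ) = (2 : ℕ) by norm_num, Real.rpow_natCast_mul (Nat.cast_nonneg _)]
  gcongr
  calc ((n.sqrt : ℕ) : ℝ) ^ 2 ≤ n := by exact_mod_cast n.sqrt_le'
    _ ≤ a ^ 2 + n := le_add_of_nonneg_left (sq_nonneg a)

noncomputable def puncturedBall (n : ℕ) : Finset (ℤ × ℤ × ℤ) :=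
  {p ∈ Icc (-n.sqrt : ℤ × ℤ × ℤ) n.sqrt | p ≠ 0 ∧ p.1 ^ 2 + p.2.1 ^ 2 + p.2.2 ^ 2 ≤ n}

lemma mem_puncturedBall {p : ℤ × ℤ × ℤ} {n : ℕ} :
    p ∈ puncturedBall n ↔ p ≠ 0 ∧ p.1 ^ 2 + p.2.1 ^ 2 + p.2.2 ^ 2 ≤ n := by
  refine mem_filter.trans (and_iff_right_of_imp fun hp => ?_)
  rw [mem_Icc_neg_natCast_iff, Nat.le_sqrt', ← Nat.cast_le (α := ℤ)]
  push_cast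
  exact (natSupNorm_sq_le p).trans hp.2

lemma natSupNorm_mem_Icc_of_mem_puncturedBall {p : ℤ × ℤ × ℤ} {n : ℕ} (hp : p ∈ puncturedBall n) :
    natSupNorm p ∈ Icc 1 n.sqrt :=
  mem_Icc.2 ⟨Nat.one_le_iff_ne_zero.2 (natSupNorm_eq_zero_iff.not.2 (mem_puncturedBall.1 hp).1),
    mem_Icc_neg_natCast_iff.1 (mem_filter.1 hp).1⟩

lemma tsum_subtype_eq_sum_puncturedBall {M : Type*} [AddCommMonoid M] [TopologicalSpace M]
    (n : ℕ) (f : ℤ × ℤ × ℤ → M) :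
    ∑' p : {p : ℤ × ℤ × ℤ // p ≠ 0 ∧ p.1 ^ 2 + p.2.1 ^ 2 + p.2.2 ^ 2 ≤ (n : ℤ)}, f p =
      ∑ p ∈ puncturedBall n, f p :=
  ((Equiv.subtypeEquivRight fun _ => mem_puncturedBall).tsum_eq _).symm.trans
    (tsum_subtype _ f)

noncomputable def latticeWeight (a s : ℝ) (p : ℤ × ℤ × ℤ) : ℝ :=
  (a ^ 2 + (p.1 : ℝ) ^ 2 + (p.2.1 : ℝ) ^ 2 + (p.2.2 : ℝ) ^ 2) ^ s

lemma latticeWeight_le_of_nonneg {s : ℝ} (hs : 0 ≤ s) (a : ℝ) {n : ℕ} {p : ℤ × ℤ × ℤ}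
    (hp : p ∈ puncturedBall n) : latticeWeight a s p ≤ (a ^ 2 + n) ^ s := by
  have hpn : ((p.1 ^ 2 + p.2.1 ^ 2 + p.2.2 ^ 2 : ℤ) : ℝ) ≤ n := by
    exact_mod_cast (mem_puncturedBall.1 hp).2
  push_cast at hpn
  exact Real.rpow_le_rpow (by positivity) (by linarith) hs

lemma latticeWeight_le_of_nonpos {s : ℝ} (hs : s ≤ 0) (a : ℝ) {p : ℤ × ℤ × ℤ} (hp : p ≠ 0) :
    latticeWeight a s p ≤ (natSupNorm p : ℝ) ^ (2 * s) := by
  have hM : (0 : ℝ) < natSupNorm p := by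
    exact_mod_cast Nat.pos_of_ne_zero (natSupNorm_eq_zero_iff.not.2 hp)
  have hsq : ((natSupNorm p : ℤ) : ℝ) ^ 2 ≤ ((p.1 ^ 2 + p.2.1 ^ 2 + p.2.2 ^ 2 : ℤ) : ℝ) := by
    exact_mod_cast natSupNorm_sq_le p
  push_cast at hsq
  rw [show (2 : ℝ) = (2 : ℕ) by norm_num, Real.rpow_natCast_mul hM.le]
  exact Real.rpow_le_rpow_of_nonpos (by positivity) (by linarith [sq_nonneg a]) hs

lemma sum_puncturedBall_latticeWeight_le_of_nonneg {s : ℝ} (hs : 0 ≤ s) (a : ℝ) (n : ℕ) :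
    ∑ p ∈ puncturedBall n, latticeWeight a s p ≤ 26 * (a ^ 2 + n) ^ (s + 3 / 2) := by
  have hb : 0 ≤ a ^ 2 + (n : ℝ) := by positivity
  calc ∑ p ∈ puncturedBall n, latticeWeight a s p
      ≤ 26 * ∑ M ∈ Icc 1 n.sqrt, (M : ℝ) ^ 2 * (a ^ 2 + n) ^ s :=
        sum_le_of_le_comp_natSupNorm (fun _ => natSupNorm_mem_Icc_of_mem_puncturedBall)
          (fun _ => by positivity) fun _ hp => latticeWeight_le_of_nonneg hs a hp
    _ = 26 * ((∑ M ∈ Icc 1 n.sqrt, (M : ℝ) ^ (2 : ℝ)) * (a ^ 2 + n) ^ s) := by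
        simp_rw [sum_mul, Real.rpow_two]
    _ ≤ 26 * ((n.sqrt : ℝ) ^ ((2 : ℝ) + 1) * (a ^ 2 + n) ^ s) := by
        gcongr
        exact sum_Icc_rpow_le_of_nonneg zero_le_two _
    _ ≤ 26 * ((a ^ 2 + n) ^ (3 / 2 : ℝ) * (a ^ 2 + n) ^ s) := by
        rw [show (2 : ℝ) + 1 = 2 * (3 / 2) by norm_num]
        gcongr
        exact natSqrt_rpow_two_mul_le (by norm_num) a n
    _ = 26 * (a ^ 2 + n) ^ (s + 3 / 2) := by
        rw [← Real.rpow_add' hb (by linarith), add_comm (3 / 2 : ℝ)]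

lemma sum_puncturedBall_latticeWeight_le_of_nonpos {s : ℝ} (hs : -(3 / 2) < s) (hs' : s ≤ 0)
    (a : ℝ) (n : ℕ) :
    ∑ p ∈ puncturedBall n, latticeWeight a s p ≤
      26 * max 1 (1 / (2 * s + 3)) * (a ^ 2 + n) ^ (s + 3 / 2) := by
  have hM : ∀ M ∈ Icc 1 n.sqrt, (M : ℝ) ^ 2 * (M : ℝ) ^ (2 * s) = (M : ℝ) ^ (2 * s + 2) := by
    intro M hM
    have : (M : ℝ) ≠ 0 := by exact_mod_cast (Nat.one_le_iff_ne_zero.1 (mem_Icc.1 hM).1)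
    rw [mul_comm, ← Real.rpow_add_natCast this]
    norm_num
  calc ∑ p ∈ puncturedBall n, latticeWeight a s p
      ≤ 26 * ∑ M ∈ Icc 1 n.sqrt, (M : ℝ) ^ 2 * (M : ℝ) ^ (2 * s) :=
        sum_le_of_le_comp_natSupNorm (fun _ => natSupNorm_mem_Icc_of_mem_puncturedBall)
          (fun _ => by positivity)
          fun _ hp => latticeWeight_le_of_nonpos hs' a (mem_puncturedBall.1 hp).1
    _ = 26 * ∑ M ∈ Icc 1 n.sqrt, (M : ℝ) ^ (2 * s + 2) := by rw [sum_congr rfl hM]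
    _ ≤ 26 * (max 1 (1 / (2 * s + 2 + 1)) * (n.sqrt : ℝ) ^ (2 * s + 2 + 1)) := by
        gcongr
        exact sum_Icc_rpow_le (by linarith) _
    _ = 26 * (max 1 (1 / (2 * s + 3)) * (n.sqrt : ℝ) ^ (2 * (s + 3 / 2))) := by ring_nf
    _ ≤ 26 * max 1 (1 / (2 * s + 3)) * (a ^ 2 + n) ^ (s + 3 / 2) := by
        rw [mul_assoc]
        gcongr
        exact natSqrt_rpow_two_mul_le (by linarith) a n

end LatticeBall

open LatticeBall

/-- For every `s > -3/2` there is `C_s > 0` such that for all `a ∈ ℝ` and all `n ≥ 1`,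
`∑_{(i,j,k) ∈ ℤ³ \ {0}, i²+j²+k² ≤ n} (a² + i² + j² + k²)^s ≤ C_s (a² + n)^{s + 3/2}`. -/
theorem lattice_ball_sum_le (s : ℝ) (hs : -(3 / 2) < s) :
    ∃ C > 0, ∀ (a : ℝ) (n : ℕ), 1 ≤ n →
      (∑' p : {p : ℤ × ℤ × ℤ //
          p ≠ 0 ∧ p.1 ^ 2 + p.2.1 ^ 2 + p.2.2 ^ 2 ≤ (n : ℤ)},
          (a ^ 2 + ((p : ℤ × ℤ × ℤ).1 : ℝ) ^ 2 + ((p : ℤ × ℤ × ℤ).2.1 : ℝ) ^ 2 +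
            ((p : ℤ × ℤ × ℤ).2.2 : ℝ) ^ 2) ^ s) ≤
        C * (a ^ 2 + (n : ℝ)) ^ (s + 3 / 2) := by
  refine ⟨26 * max 1 (1 / (2 * s + 3)), by positivity, fun a n _ => ?_⟩
  refine (tsum_subtype_eq_sum_puncturedBall n (latticeWeight a s)).trans_le ?_
  rcases le_total 0 s with hs₀ | hs₀
  · refine (sum_puncturedBall_latticeWeight_le_of_nonneg hs₀ a n).trans ?_
    gcongr
    exact le_mul_of_one_le_right (by norm_num) (le_max_left _ _)
  · exact sum_puncturedBall_latticeWeight_le_of_nonpos hs hs₀ a n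
end

section
/- Let s > 3/2 and a ∈ ℝ. Then the family ( (a² + i² + j² + k²)^{-s} )_{(i,j,k) ∈ ℤ³ \ {0}} is summable, and there is a constant C_s > 0 (depending only on s) such that ∑_{(i,j,k) ∈ ℤ³ \ {0}} (a² + i² + j² + k²)^{-s} ≤ C_s / (a² + 1)^{s - 3/2}. In particular, the alternating series ∑'_{(i,j,k)∈ℤ³} (-1)^{i+j+k} (a²+i²+j²+k²)^{-s} converges absolutely for s > 3/2, and its sum tends to 0 as a → ∞. -/
/-!
Put `c = a² + 1`. For `p = (i, j, k) ≠ 0` we have `|p|² ≥ 1`, hence `a² + |p|² ≥ (c + |p|²) / 2`;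
and `c + |p|²` dominates each of `c + i²`, `c + j²`, `c + k²`. So the summand is at most
`2^s ∏ (c + x²)^(-s/3)` over the three coordinates `x`, and the bound reduces to the
one-dimensional estimate `∑_{i ∈ ℤ} (c + i²)^(-t) ≤ K c^(1/2 - t)` for `t = s/3 > 1/2`. That one
follows by cutting `ℤ` into blocks of length `⌈√c⌉`: on the `q`-th block every term is at most
`3^t c^(-t) (1 + q²)^(-t)`. The alternating sum is dominated termwise by the absolute one.
-/

open Real Filter

lemma summable_int_one_add_sq_rpow_neg {t : ℝ} (ht : 1 / 2 < t) :
    Summable fun q : ℤ => (1 + (q : ℝ) ^ 2) ^ (-t) := by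
  refine (summable_abs_int_rpow (by linarith : 1 < 2 * t)).of_norm_bounded_eventually ?_
  filter_upwards [(Set.finite_singleton (0 : ℤ)).compl_mem_cofinite] with q hq
  have hq : (q : ℝ) ≠ 0 := by simpa using hq
  rw [norm_of_nonneg (by positivity)]
  calc (1 + (q : ℝ) ^ 2) ^ (-t) ≤ ((q : ℝ) ^ 2) ^ (-t) :=
        rpow_le_rpow_of_nonpos (by positivity) (by linarith) (by linarith)
    _ = |(q : ℝ)| ^ (-(2 * t)) := by
        rw [← sq_abs, ← rpow_natCast, ← rpow_mul (abs_nonneg _)]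
        ring_nf

lemma summable_and_tsum_le_of_le_on_blocks {f g : ℤ → ℝ} {B : ℕ} [NeZero B]
    (hf : ∀ i, 0 ≤ f i) (hg : Summable g) (hfg : ∀ (q : ℤ) (r : Fin B), f (q * B + r) ≤ g q) :
    Summable f ∧ ∑' i, f i ≤ B * ∑' q, g q := by
  set e := (Int.divModEquiv B).symm
  have hg0 : ∀ q, 0 ≤ g q := fun q => (hf _).trans (hfg q 0)
  have hG : HasSum (fun p : ℤ × Fin B => g p.1) (B * ∑' q, g q) := by
    have := hg.hasSum.mul (hasSum_fintype fun _ : Fin B => (1 : ℝ))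
      (hg.mul_of_nonneg .of_finite hg0 fun _ => zero_le_one)
    simpa [mul_comm] using this
  have hfe : Summable (f ∘ e) :=
    hG.summable.of_nonneg_of_le (fun _ => hf _) fun p => hfg p.1 p.2
  refine ⟨e.summable_iff.mp hfe, ?_⟩
  rw [← e.tsum_eq, ← hG.tsum_eq]
  exact hfe.tsum_le_tsum (fun p => hfg p.1 p.2) hG.summable

lemma sq_mul_one_add_sq_le {b B x : ℝ} {q : ℤ} (hb : 0 < b) (hbB : b ≤ B)
    (hqx : q * B ≤ x) (hxq : x < (q + 1) * B) :
    b ^ 2 * (1 + (q : ℝ) ^ 2) ≤ 3 * (b ^ 2 + x ^ 2) := by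
  rcases le_or_gt 0 q with hq | hq
  · have hq' : (0 : ℝ) ≤ q := by exact_mod_cast hq
    have : q * b ≤ x := by nlinarith
    nlinarith [mul_nonneg hq' hb.le]
  · have hq' : (q : ℝ) + 1 ≤ 0 := by exact_mod_cast hq
    have : x ≤ (q + 1) * b := by nlinarith
    nlinarith [mul_nonpos_of_nonpos_of_nonneg hq' hb.le, sq_nonneg (2 * (q : ℝ) + 3)]

lemma exists_tsum_int_add_sq_rpow_neg_le {t : ℝ} (ht : 1 / 2 < t) :
    ∃ K > 0, ∀ c : ℝ, 1 ≤ c →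
      Summable (fun i : ℤ => (c + (i : ℝ) ^ 2) ^ (-t)) ∧
        ∑' i : ℤ, (c + (i : ℝ) ^ 2) ^ (-t) ≤ K * c ^ (1 / 2 - t) := by
  have hG := summable_int_one_add_sq_rpow_neg ht
  set G := ∑' q : ℤ, (1 + (q : ℝ) ^ 2) ^ (-t)
  have hG0 : 0 < G := hG.tsum_pos (fun _ => by positivity) 0 (by simp)
  refine ⟨2 * 3 ^ t * G, by positivity, fun c hc => ?_⟩
  set b := √c
  have hb : 1 ≤ b := one_le_sqrt.mpr hc
  have hbc : b ^ 2 = c := sq_sqrt (by linarith)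
  set B := ⌈b⌉₊
  have hbB : b ≤ B := Nat.le_ceil b
  have hBb : (B : ℝ) ≤ 2 * b := by linarith [Nat.ceil_lt_add_one (zero_le_one.trans hb)]
  have : NeZero B := ⟨by positivity⟩
  have hblock : ∀ (q : ℤ) (r : Fin B), (c + ((q * B + r : ℤ) : ℝ) ^ 2) ^ (-t) ≤
      3 ^ t * c ^ (-t) * (1 + (q : ℝ) ^ 2) ^ (-t) := by
    intro q r
    have hx := sq_mul_one_add_sq_le (x := q * B + (r : ℕ)) (q := q) (by linarith) hbB (by simp)
      (by nlinarith [(by exact_mod_cast r.is_lt : ((r : ℕ) : ℝ) < B)])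
    rw [hbc] at hx
    push_cast
    calc (c + ((q : ℝ) * B + (r : ℕ)) ^ 2) ^ (-t) ≤ (c * (1 + (q : ℝ) ^ 2) / 3) ^ (-t) :=
          rpow_le_rpow_of_nonpos (by positivity) (by linarith) (by linarith)
      _ = 3 ^ t * c ^ (-t) * (1 + (q : ℝ) ^ 2) ^ (-t) := by
          rw [div_rpow (by positivity) (by norm_num), mul_rpow (by positivity) (by positivity),
            rpow_neg (by norm_num : (0 : ℝ) ≤ 3)]
          field_simp
  obtain ⟨hsum, hle⟩ := summable_and_tsum_le_of_le_on_blocks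
    (f := fun i : ℤ => (c + (i : ℝ) ^ 2) ^ (-t)) (fun _ => by positivity)
    (hG.mul_left (3 ^ t * c ^ (-t))) hblock
  refine ⟨hsum, hle.trans ?_⟩
  have hcb : b * c ^ (-t) = c ^ (1 / 2 - t) := by
    rw [show b = c ^ (1 / 2 : ℝ) from sqrt_eq_rpow c, ← rpow_add (by linarith), sub_eq_add_neg]
  rw [tsum_mul_left, ← hcb]
  calc (B : ℝ) * (3 ^ t * c ^ (-t) * G) ≤ 2 * b * (3 ^ t * c ^ (-t) * G) := by gcongr
    _ = 2 * 3 ^ t * G * (b * c ^ (-t)) := by ring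

lemma rpow_neg_le_two_rpow_mul {x y s : ℝ} (hy : 0 < y) (hyx : y ≤ 2 * x) (hs : 0 ≤ s) :
    x ^ (-s) ≤ 2 ^ s * y ^ (-s) := by
  calc x ^ (-s) = 2 ^ s * (2 * x) ^ (-s) := by
        rw [mul_rpow (by norm_num) (by linarith : (0 : ℝ) ≤ x), rpow_neg (by norm_num : (0 : ℝ) ≤ 2)]
        field_simp
    _ ≤ 2 ^ s * y ^ (-s) :=
        mul_le_mul_of_nonneg_left (rpow_le_rpow_of_nonpos hy hyx (by linarith)) (by positivity)

lemma add_add_add_rpow_neg_le {c x y z s : ℝ} (hc : 0 < c) (hx : 0 ≤ x) (hy : 0 ≤ y)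
    (hz : 0 ≤ z) (hs : 0 ≤ s) :
    (c + x + y + z) ^ (-s) ≤
      (c + x) ^ (-(s / 3)) * ((c + y) ^ (-(s / 3)) * (c + z) ^ (-(s / 3))) := by
  have hw : 0 < c + x + y + z := by positivity
  have hle : ∀ v, 0 ≤ v → v ≤ x + y + z → (c + x + y + z) ^ (-(s / 3)) ≤ (c + v) ^ (-(s / 3)) :=
    fun v hv hvw => rpow_le_rpow_of_nonpos (by positivity) (by linarith) (by linarith)
  calc (c + x + y + z) ^ (-s) = (c + x + y + z) ^ (-(s / 3)) *
        ((c + x + y + z) ^ (-(s / 3)) * (c + x + y + z) ^ (-(s / 3))) := by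
        rw [← rpow_add hw, ← rpow_add hw]; ring_nf
    _ ≤ _ := by
        gcongr ?_ * (?_ * ?_)
        exacts [hle x hx (by linarith), hle y hy (by linarith), hle z hz (by linarith)]

lemma hasSum_mul_mul_of_nonneg {ι : Type*} {u : ι → ℝ} {S : ℝ} (hu : HasSum u S) (hu0 : 0 ≤ u) :
    HasSum (fun p : ι × ι × ι => u p.1 * (u p.2.1 * u p.2.2)) (S * (S * S)) := by
  have h2 := hu.mul hu (hu.summable.mul_of_nonneg hu.summable hu0 hu0)
  exact hu.mul h2 (hu.summable.mul_of_nonneg h2.summable hu0 fun p => mul_nonneg (hu0 _) (hu0 _))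

lemma one_le_sum_sq_of_ne_zero {p : ℤ × ℤ × ℤ} (hp : p ≠ 0) :
    1 ≤ (p.1 : ℝ) ^ 2 + (p.2.1 : ℝ) ^ 2 + (p.2.2 : ℝ) ^ 2 := by
  obtain ⟨i, j, k⟩ := p
  have : 0 < i ^ 2 + j ^ 2 + k ^ 2 := by
    by_contra! h
    have hi : i ^ 2 = 0 := by nlinarith [sq_nonneg i, sq_nonneg j, sq_nonneg k]
    have hj : j ^ 2 = 0 := by nlinarith [sq_nonneg i, sq_nonneg j, sq_nonneg k]
    have hk : k ^ 2 = 0 := by nlinarith [sq_nonneg i, sq_nonneg j, sq_nonneg k]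
    simp_all
  exact_mod_cast this

noncomputable def latticeTerm (s a : ℝ) (p : ℤ × ℤ × ℤ) : ℝ :=
  (a ^ 2 + (p.1 : ℝ) ^ 2 + (p.2.1 : ℝ) ^ 2 + (p.2.2 : ℝ) ^ 2) ^ (-s)

lemma latticeTerm_nonneg (s a : ℝ) (p : ℤ × ℤ × ℤ) : 0 ≤ latticeTerm s a p := by
  unfold latticeTerm; positivity

lemma latticeTerm_le {s : ℝ} (hs : 0 ≤ s) (a : ℝ) {p : ℤ × ℤ × ℤ} (hp : p ≠ 0) :
    latticeTerm s a p ≤ 2 ^ s * ((a ^ 2 + 1 + (p.1 : ℝ) ^ 2) ^ (-(s / 3)) *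
      ((a ^ 2 + 1 + (p.2.1 : ℝ) ^ 2) ^ (-(s / 3)) * (a ^ 2 + 1 + (p.2.2 : ℝ) ^ 2) ^ (-(s / 3)))) := by
  have h1 := one_le_sum_sq_of_ne_zero hp
  refine (rpow_neg_le_two_rpow_mul (y := a ^ 2 + 1 + (p.1 : ℝ) ^ 2 + (p.2.1 : ℝ) ^ 2 +
    (p.2.2 : ℝ) ^ 2) (by positivity) (by nlinarith [sq_nonneg a]) hs).trans ?_
  gcongr
  exact add_add_add_rpow_neg_le (by positivity) (sq_nonneg _) (sq_nonneg _) (sq_nonneg _) hs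

lemma exists_tsum_latticeTerm_le {s : ℝ} (hs : 3 / 2 < s) :
    ∃ C > 0, ∀ a : ℝ, Summable (fun p : {p : ℤ × ℤ × ℤ // p ≠ 0} => latticeTerm s a p) ∧
      ∑' p : {p : ℤ × ℤ × ℤ // p ≠ 0}, latticeTerm s a p ≤ C / (a ^ 2 + 1) ^ (s - 3 / 2) := by
  obtain ⟨K, hK, hK_le⟩ := exists_tsum_int_add_sq_rpow_neg_le (t := s / 3) (by linarith)
  refine ⟨2 ^ s * K ^ 3, by positivity, fun a => ?_⟩
  set c := a ^ 2 + 1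
  have hc : 1 ≤ c := le_add_of_nonneg_left (sq_nonneg a)
  obtain ⟨hu, hS⟩ := hK_le c hc
  set S := ∑' i : ℤ, (c + (i : ℝ) ^ 2) ^ (-(s / 3))
  have hF := (hasSum_mul_mul_of_nonneg hu.hasSum fun _ => by positivity).mul_left (2 ^ s)
  have hle := fun p : {p : ℤ × ℤ × ℤ // p ≠ 0} => latticeTerm_le (s := s) (by linarith) a p.2
  have hsum : Summable (fun p : {p : ℤ × ℤ × ℤ // p ≠ 0} => latticeTerm s a p) :=
    (hF.summable.subtype _).of_nonneg_of_le (fun _ => latticeTerm_nonneg _ _ _) hle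
  refine ⟨hsum, ?_⟩
  calc ∑' p : {p : ℤ × ℤ × ℤ // p ≠ 0}, latticeTerm s a p
      ≤ 2 ^ s * (S * (S * S)) := by
        rw [← hF.tsum_eq]
        exact hsum.tsum_le_tsum_of_inj Subtype.val Subtype.val_injective
          (fun _ _ => by positivity) hle hF.summable
    _ ≤ 2 ^ s * (K * c ^ (1 / 2 - s / 3)) ^ 3 := by
        rw [pow_three]
        gcongr
    _ = 2 ^ s * K ^ 3 / c ^ (s - 3 / 2) := by
        rw [mul_pow, ← rpow_natCast (c ^ _), ← rpow_mul (by positivity),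
          show (1 / 2 - s / 3) * ((3 : ℕ) : ℝ) = -(s - 3 / 2) by push_cast; ring,
          rpow_neg (by positivity)]
        ring

/-- For `s > 3/2` the family `((a²+i²+j²+k²)^{-s})_{(i,j,k) ∈ ℤ³ \ {0}}` is summable, with
`∑'_{(i,j,k) ≠ 0} (a²+i²+j²+k²)^{-s} ≤ C_s/(a²+1)^{s-3/2}` for a constant `C_s > 0`
independent of `a`. In particular, the alternating series
`∑'_{(i,j,k) ≠ 0} (-1)^{i+j+k} (a²+i²+j²+k²)^{-s}` converges absolutely and its sum tends to
`0` as `a → ∞`. -/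
theorem lattice_sum_summable_of_gt (s : ℝ) (hs : 3 / 2 < s) :
    ∃ C > 0,
      (∀ a : ℝ,
        Summable (fun p : {p : ℤ × ℤ × ℤ // p ≠ 0} =>
          (a ^ 2 + ((p : ℤ × ℤ × ℤ).1 : ℝ) ^ 2 + ((p : ℤ × ℤ × ℤ).2.1 : ℝ) ^ 2 +
            ((p : ℤ × ℤ × ℤ).2.2 : ℝ) ^ 2) ^ (-s)) ∧
        (∑' p : {p : ℤ × ℤ × ℤ // p ≠ 0},
          (a ^ 2 + ((p : ℤ × ℤ × ℤ).1 : ℝ) ^ 2 + ((p : ℤ × ℤ × ℤ).2.1 : ℝ) ^ 2 +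
            ((p : ℤ × ℤ × ℤ).2.2 : ℝ) ^ 2) ^ (-s)) ≤ C / (a ^ 2 + 1) ^ (s - 3 / 2)) ∧
      (∀ a : ℝ,
        Summable (fun p : {p : ℤ × ℤ × ℤ // p ≠ 0} =>
          |(-1 : ℝ) ^ ((p : ℤ × ℤ × ℤ).1 + (p : ℤ × ℤ × ℤ).2.1 + (p : ℤ × ℤ × ℤ).2.2) *
            (a ^ 2 + ((p : ℤ × ℤ × ℤ).1 : ℝ) ^ 2 + ((p : ℤ × ℤ × ℤ).2.1 : ℝ) ^ 2 +
              ((p : ℤ × ℤ × ℤ).2.2 : ℝ) ^ 2) ^ (-s)|)) ∧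
      Filter.Tendsto (fun a : ℝ =>
          ∑' p : {p : ℤ × ℤ × ℤ // p ≠ 0},
            (-1 : ℝ) ^ ((p : ℤ × ℤ × ℤ).1 + (p : ℤ × ℤ × ℤ).2.1 + (p : ℤ × ℤ × ℤ).2.2) *
              (a ^ 2 + ((p : ℤ × ℤ × ℤ).1 : ℝ) ^ 2 + ((p : ℤ × ℤ × ℤ).2.1 : ℝ) ^ 2 +
                ((p : ℤ × ℤ × ℤ).2.2 : ℝ) ^ 2) ^ (-s))
        Filter.atTop (nhds 0) := by
  obtain ⟨C, hC, hbound⟩ := exists_tsum_latticeTerm_le hs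
  have habs : ∀ a (p : ℤ × ℤ × ℤ),
      |(-1 : ℝ) ^ (p.1 + p.2.1 + p.2.2) * latticeTerm s a p| = latticeTerm s a p := fun a p => by
    rw [abs_mul, abs_neg_one_zpow, one_mul, abs_of_nonneg (latticeTerm_nonneg s a p)]
  have habs_summable : ∀ a : ℝ, Summable (fun p : {p : ℤ × ℤ × ℤ // p ≠ 0} =>
      |(-1 : ℝ) ^ (p.1.1 + p.1.2.1 + p.1.2.2) * latticeTerm s a p|) :=
    fun a => (hbound a).1.congr fun p => (habs a p).symm
  have hdecay : Tendsto (fun a : ℝ => C / (a ^ 2 + 1) ^ (s - 3 / 2)) atTop (nhds 0) :=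
    tendsto_const_nhds.div_atTop <| (tendsto_rpow_atTop (by linarith)).comp <|
      tendsto_atTop_add_const_right _ 1 (tendsto_pow_atTop two_ne_zero)
  refine ⟨C, hC, hbound, habs_summable, squeeze_zero_norm (fun a => ?_) hdecay⟩
  calc ‖∑' p : {p : ℤ × ℤ × ℤ // p ≠ 0}, (-1 : ℝ) ^ (p.1.1 + p.1.2.1 + p.1.2.2) * latticeTerm s a p‖
      ≤ ∑' p : {p : ℤ × ℤ × ℤ // p ≠ 0}, |(-1 : ℝ) ^ (p.1.1 + p.1.2.1 + p.1.2.2) * latticeTerm s a p| :=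
        norm_tsum_le_tsum_norm (habs_summable a)
    _ = ∑' p : {p : ℤ × ℤ × ℤ // p ≠ 0}, latticeTerm s a p := tsum_congr fun p => habs a p
    _ ≤ C / (a ^ 2 + 1) ^ (s - 3 / 2) := (hbound a).2
end

section
/- There is a constant c > 0 such that the set { n ∈ ℕ : r₃(n) ≥ c √n } is infinite; that is, r₃(n) ≥ c √n holds for infinitely many n. -/
/-!
Summing `r₃(n)` over `n ≤ 3m²` counts at least the `(m + 1)³` points of the cube `[0, m]³`, while
there are only `3m² + 1` such `n`. By pigeonhole some `n ≤ 3m²` has `r₃(n) ≥ m / 3 ≥ √n / 6`,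
and these values of `r₃(n)` are unbounded as `m → ∞`.
-/

open Finset

/-- `r3 n` is the number of triples `(i,j,k) ∈ ℤ³` with `i² + j² + k² = n`. -/
noncomputable def r3 (n : ℕ) : ℕ :=
  Set.ncard {p : ℤ × ℤ × ℤ | p.1 ^ 2 + p.2.1 ^ 2 + p.2.2 ^ 2 = (n : ℤ)}

def sqNorm (p : ℤ × ℤ × ℤ) : ℤ := p.1 ^ 2 + p.2.1 ^ 2 + p.2.2 ^ 2

lemma r3_eq_ncard (n : ℕ) : r3 n = {p | sqNorm p = n}.ncard := rfl

lemma Int.abs_le_of_sq_le {x n : ℤ} (h : x ^ 2 ≤ n) : |x| ≤ n :=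
  (Int.abs_eq_natAbs x ▸ Int.natAbs_le_self_sq x).trans h

lemma finite_setOf_sqNorm_eq (n : ℤ) : {p | sqNorm p = n}.Finite := by
  have hbox := Set.finite_Icc (-n) n
  refine (hbox.prod (hbox.prod hbox)).subset ?_
  rintro ⟨x, y, z⟩ (h : x ^ 2 + y ^ 2 + z ^ 2 = n)
  have hx : |x| ≤ n := Int.abs_le_of_sq_le (by nlinarith [sq_nonneg y, sq_nonneg z])
  have hy : |y| ≤ n := Int.abs_le_of_sq_le (by nlinarith [sq_nonneg x, sq_nonneg z])
  have hz : |z| ≤ n := Int.abs_le_of_sq_le (by nlinarith [sq_nonneg x, sq_nonneg y])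
  exact ⟨abs_le.1 hx, abs_le.1 hy, abs_le.1 hz⟩

lemma card_filter_sqNorm_eq_le_r3 (s : Finset (ℤ × ℤ × ℤ)) (n : ℕ) :
    #{p ∈ s | sqNorm p = n} ≤ r3 n := by
  rw [r3_eq_ncard, ← Set.ncard_coe_finset]
  exact Set.ncard_le_ncard (fun p hp => (mem_filter.1 hp).2) (finite_setOf_sqNorm_eq n)

lemma exists_r3_ge_div_three (m : ℕ) : ∃ n ≤ 3 * m ^ 2, (m : ℝ) / 3 ≤ r3 n := by
  let cube : Finset (ℤ × ℤ × ℤ) := Icc 0 (m : ℤ) ×ˢ Icc 0 (m : ℤ) ×ˢ Icc 0 (m : ℤ)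
  have hcube : #cube = (m + 1) ^ 3 := by
    simp only [cube, card_product, Int.card_Icc, sub_zero]
    rw [show ((m : ℤ) + 1).toNat = m + 1 by omega]
    ring
  have hmaps : ∀ p ∈ cube, (sqNorm p).toNat ∈ range (3 * m ^ 2 + 1) := by
    rintro ⟨x, y, z⟩ hp
    simp only [cube, mem_product, mem_Icc] at hp
    obtain ⟨⟨hx0, hxm⟩, ⟨hy0, hym⟩, hz0, hzm⟩ := hp
    have : sqNorm (x, y, z) ≤ 3 * (m : ℤ) ^ 2 := by
      simp only [sqNorm]
      nlinarith
    rw [mem_range, Nat.lt_succ_iff, Int.toNat_le]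
    exact_mod_cast this
  have hcount : #(range (3 * m ^ 2 + 1)) • ((m : ℝ) / 3) ≤ #cube := by
    rw [card_range, hcube, nsmul_eq_mul]
    push_cast
    nlinarith [sq_nonneg (m : ℝ), m.cast_nonneg (α := ℝ)]
  obtain ⟨n, hn, hfiber⟩ :=
    exists_le_card_fiber_of_nsmul_le_card_of_maps_to hmaps nonempty_range_add_one hcount
  refine ⟨n, Nat.lt_succ_iff.1 (mem_range.1 hn), hfiber.trans ?_⟩
  have hfilter : {p ∈ cube | (sqNorm p).toNat = n} = {p ∈ cube | sqNorm p = n} := by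
    refine filter_congr fun p _ => ?_
    have : 0 ≤ sqNorm p := by simp only [sqNorm]; positivity
    omega
  rw [hfilter]
  exact_mod_cast card_filter_sqNorm_eq_le_r3 cube n

lemma sqrt_div_six_le_of_le_three_mul_sq {n m : ℕ} (h : n ≤ 3 * m ^ 2) :
    Real.sqrt n / 6 ≤ (m : ℝ) / 3 := by
  have : Real.sqrt n ≤ 2 * m := by
    rw [Real.sqrt_le_iff]
    refine ⟨by positivity, ?_⟩
    have : (n : ℝ) ≤ 3 * m ^ 2 := by exact_mod_cast h
    nlinarith [sq_nonneg (m : ℝ)]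
  linarith

/-- There is `c > 0` such that `r₃(n) ≥ c √n` for infinitely many `n`. -/
theorem r3_lower_bound_infinitely_often :
    ∃ c > (0 : ℝ), {n : ℕ | c * Real.sqrt (n : ℝ) ≤ (r3 n : ℝ)}.Infinite := by
  refine ⟨1 / 6, by norm_num, Set.Infinite.of_image r3 (Set.infinite_of_not_bddAbove ?_)⟩
  rintro ⟨B, hB⟩
  obtain ⟨n, hn, hr3⟩ := exists_r3_ge_div_three (3 * B + 3)
  have hmem : n ∈ {n : ℕ | 1 / 6 * Real.sqrt (n : ℝ) ≤ (r3 n : ℝ)} := by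
    have := sqrt_div_six_le_of_le_three_mul_sq hn
    show 1 / 6 * Real.sqrt n ≤ (r3 n : ℝ)
    linarith
  have hB' : (r3 n : ℝ) ≤ B := by exact_mod_cast hB ⟨n, hmem, rfl⟩
  push_cast at hr3
  linarith
end

section
/- Let a ∈ ℝ and 0 < s ≤ 1/2. Then the sequence of terms ( (-1)^n r₃(n)/(a² + n)^s )_{n≥1} does not converge to 0, and consequently the sequence of partial sums N ↦ ∑_{n=1}^{N} (-1)^n r₃(n)/(a² + n)^s does not converge; i.e. the series for the Madelung constant summed by expanding spheres diverges for s ≤ 1/2. -/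
/-!
The `(2m+1)³` lattice points of the cube `[-m, m]³` lie on the spheres `i² + j² + k² = n` with
`n ≤ 3m²`, so by pigeonhole some `n ∈ [1, 3m²]` has `r₃(n) > 2m`. For such `n` and `m ≥ |a|`,
`(a² + n)^s ≤ √(a² + 3m²) ≤ 2m` because `s ≤ 1/2`, so the `n`-th term has absolute value at
least `1`. Since `r₃(n) ≤ (2n+1)³`, these `n` are unbounded as `m → ∞`; hence the terms do not
tend to `0`, and the partial sums cannot converge.
-/

open scoped BigOperators

open Filter Finset Topology

lemma Real.rpow_le_of_le_sq {x y s : ℝ} (hx : 1 ≤ x) (hy : 0 ≤ y) (hxy : x ≤ y ^ 2)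
    (hs : s ≤ 1 / 2) : x ^ s ≤ y :=
  calc x ^ s ≤ x ^ (1 / 2 : ℝ) := Real.rpow_le_rpow_of_exponent_le hx hs
    _ = √x := (Real.sqrt_eq_rpow x).symm
    _ ≤ y := (Real.sqrt_le_left hy).mpr hxy

lemma tendsto_zero_of_tendsto_sum_Icc {G : Type*} [AddCommGroup G] [TopologicalSpace G]
    [IsTopologicalAddGroup G] {f : ℕ → G} {L : G}
    (h : Tendsto (fun N => ∑ n ∈ Icc 1 N, f n) atTop (𝓝 L)) : Tendsto f atTop (𝓝 0) := by
  have diff := (h.comp (tendsto_add_atTop_nat 1)).sub h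
  rw [sub_self] at diff
  refine (tendsto_add_atTop_iff_nat 1).mp (diff.congr fun N => ?_)
  simp [Function.comp, sum_Icc_succ_top (Nat.le_add_left 1 N)]

namespace Madelung

def sumSq (p : ℤ × ℤ × ℤ) : ℤ := p.1 ^ 2 + p.2.1 ^ 2 + p.2.2 ^ 2

lemma sumSq_nonneg (p : ℤ × ℤ × ℤ) : 0 ≤ sumSq p := by
  unfold sumSq; positivity

lemma sumSq_pos {p : ℤ × ℤ × ℤ} (hp : p ≠ 0) : 0 < sumSq p := by
  obtain ⟨i, j, k⟩ := p
  refine (sumSq_nonneg _).lt_of_ne' fun h => hp ?_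
  simp only [sumSq] at h
  have hi : i = 0 := by nlinarith [sq_nonneg i, sq_nonneg j, sq_nonneg k]
  have hj : j = 0 := by nlinarith [sq_nonneg i, sq_nonneg j, sq_nonneg k]
  have hk : k = 0 := by nlinarith [sq_nonneg i, sq_nonneg j, sq_nonneg k]
  simp [hi, hj, hk]

noncomputable def cube (m : ℕ) : Finset (ℤ × ℤ × ℤ) :=
  Icc (-(m : ℤ)) m ×ˢ Icc (-(m : ℤ)) m ×ˢ Icc (-(m : ℤ)) m

lemma card_cube (m : ℕ) : #(cube m) = (2 * m + 1) ^ 3 := by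
  simp only [cube, card_product, Int.card_Icc]
  rw [show ((m : ℤ) + 1 - -(m : ℤ)).toNat = 2 * m + 1 by omega]
  ring

lemma mem_cube_of_sumSq_le {m : ℕ} {p : ℤ × ℤ × ℤ} (hp : sumSq p ≤ m) : p ∈ cube m := by
  obtain ⟨i, j, k⟩ := p
  simp only [sumSq] at hp
  have bound : ∀ x : ℤ, x ^ 2 ≤ m → -(m : ℤ) ≤ x ∧ x ≤ m := fun x hx =>
    ⟨by nlinarith [Int.le_self_sq (-x)], by nlinarith [Int.le_self_sq x]⟩
  simp only [cube, mem_product, mem_Icc]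
  exact ⟨bound i (by nlinarith [sq_nonneg j, sq_nonneg k]),
    bound j (by nlinarith [sq_nonneg i, sq_nonneg k]),
    bound k (by nlinarith [sq_nonneg i, sq_nonneg j])⟩

lemma sumSq_le_of_mem_cube {m : ℕ} {p : ℤ × ℤ × ℤ} (hp : p ∈ cube m) :
    sumSq p ≤ (3 * m ^ 2 : ℕ) := by
  obtain ⟨i, j, k⟩ := p
  simp only [cube, mem_product, mem_Icc] at hp
  obtain ⟨⟨hi, hi'⟩, ⟨hj, hj'⟩, ⟨hk, hk'⟩⟩ := hp
  simp only [sumSq]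
  push_cast
  nlinarith

lemma sphere_eq_filter_cube {n m : ℕ} (h : n ≤ m) :
    {p : ℤ × ℤ × ℤ | p.1 ^ 2 + p.2.1 ^ 2 + p.2.2 ^ 2 = (n : ℤ)} =
      ↑((cube m).filter fun p => sumSq p = n) := by
  ext p
  simp only [Set.mem_ofPred_eq, coe_filter]
  exact ⟨fun hp => ⟨mem_cube_of_sumSq_le (by rw [sumSq, hp]; exact_mod_cast h), hp⟩,
    And.right⟩

lemma r3_le (n : ℕ) : r3 n ≤ (2 * n + 1) ^ 3 := by
  rw [r3, sphere_eq_filter_cube le_rfl, Set.ncard_coe_finset, ← card_cube]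
  exact card_filter_le _ _

lemma card_filter_cube_le_r3 (m n : ℕ) :
    #((cube m).filter fun p => sumSq p = n) ≤ r3 n := by
  rw [r3, ← Set.ncard_coe_finset]
  refine Set.ncard_le_ncard (fun p hp => (mem_filter.mp hp).2) ?_
  rw [sphere_eq_filter_cube le_rfl]
  exact finite_toSet _

lemma exists_two_mul_lt_r3 {m : ℕ} (hm : 1 ≤ m) : ∃ n ∈ Icc 1 (3 * m ^ 2), 2 * m < r3 n := by
  have maps : ∀ p ∈ (cube m).erase 0, (sumSq p).toNat ∈ Icc 1 (3 * m ^ 2) := by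
    intro p hp
    obtain ⟨hp0, hp⟩ := mem_erase.mp hp
    have := sumSq_pos hp0
    have := sumSq_le_of_mem_cube hp
    simp only [mem_Icc]
    omega
  have count : #(Icc 1 (3 * m ^ 2)) * (2 * m) < #((cube m).erase 0) := by
    rw [Nat.card_Icc, Nat.add_sub_cancel,
      card_erase_of_mem (mem_cube_of_sumSq_le (by simp [sumSq])), card_cube]
    zify [Nat.one_le_pow 3 _ (Nat.succ_pos (2 * m))]
    nlinarith
  obtain ⟨n, hn, hlt⟩ := exists_lt_card_fiber_of_mul_lt_card_of_maps_to maps count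
  refine ⟨n, hn, hlt.trans_le ((card_le_card ?_).trans (card_filter_cube_le_r3 m n))⟩
  intro p hp
  simp only [mem_filter, mem_erase] at hp ⊢
  refine ⟨hp.1.2, ?_⟩
  have := sumSq_nonneg p
  omega

lemma frequently_one_le_abs_madelung_term (a : ℝ) {s : ℝ} (hs : s ≤ 1 / 2) :
    ∃ᶠ n in atTop, 1 ≤ |(-1 : ℝ) ^ n * (r3 n : ℝ) / (a ^ 2 + (n : ℝ)) ^ s| := by
  rw [frequently_atTop]
  intro M
  -- `m ≥ |a|` bounds the denominator, and `2m ≥ (2M+1)³` forces `n ≥ M` through `r3_le`.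
  set m := ⌈|a|⌉₊ + (2 * M + 1) ^ 3
  obtain ⟨n, hn, hr3⟩ :=
    exists_two_mul_lt_r3 (m := m) (le_add_left (Nat.one_le_pow _ _ (by omega)))
  obtain ⟨hn1, hn3⟩ := mem_Icc.mp hn
  have hnM : M ≤ n := by
    by_contra! hlt
    have := (r3_le n).trans (Nat.pow_le_pow_left (by omega : 2 * n + 1 ≤ 2 * M + 1) 3)
    omega
  refine ⟨n, hnM, ?_⟩
  have ham : |a| ≤ m := (Nat.le_ceil _).trans (by norm_cast; omega)
  have hbase : 1 ≤ a ^ 2 + n := by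
    have : (1 : ℝ) ≤ n := by exact_mod_cast hn1
    nlinarith [sq_nonneg a]
  have hden : (a ^ 2 + n) ^ s ≤ (2 * m : ℝ) := by
    refine Real.rpow_le_of_le_sq hbase (by positivity) ?_ hs
    have : (n : ℝ) ≤ 3 * m ^ 2 := by exact_mod_cast hn3
    nlinarith [sq_abs a, abs_nonneg a]
  have hr3 : (2 * m : ℝ) < r3 n := by exact_mod_cast hr3
  rw [abs_div, abs_mul, abs_pow, abs_neg, abs_one, one_pow, one_mul, Nat.abs_cast,
    abs_of_pos (by positivity), one_le_div₀ (by positivity)]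
  linarith

end Madelung

theorem madelung_spheres_diverges_general (a s : ℝ) (hs : s ≤ 1 / 2) :
    ¬ Filter.Tendsto
        (fun n : ℕ => (-1 : ℝ) ^ n * (r3 n : ℝ) / (a ^ 2 + (n : ℝ)) ^ s)
        Filter.atTop (nhds 0) ∧
      ∀ L : ℝ, ¬ Filter.Tendsto
        (fun N : ℕ => ∑ n ∈ Finset.Icc 1 N, (-1 : ℝ) ^ n * (r3 n : ℝ) / (a ^ 2 + (n : ℝ)) ^ s)
        Filter.atTop (nhds L) := by
  have terms_not_small :
      ¬ Tendsto (fun n : ℕ => (-1 : ℝ) ^ n * (r3 n : ℝ) / (a ^ 2 + (n : ℝ)) ^ s) atTop (𝓝 0) :=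
    fun h =>
      Madelung.frequently_one_le_abs_madelung_term a hs
        ((Metric.tendsto_nhds.mp h 1 one_pos).mono fun n hn =>
          not_le.mpr (by rwa [Real.dist_eq, sub_zero] at hn))
  exact ⟨terms_not_small, fun L hL => terms_not_small (tendsto_zero_of_tendsto_sum_Icc hL)⟩

/-- For `0 < s ≤ 1/2` the terms `(-1)^n r₃(n)/(a²+n)^s` do not tend to `0`, and the partial
sums `N ↦ ∑_{n=1}^N (-1)^n r₃(n)/(a²+n)^s` do not converge: the series for the Madelung
constant summed by expanding spheres diverges for `s ≤ 1/2`. -/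
theorem madelung_spheres_diverges (a s : ℝ) (hs0 : 0 < s) (hs : s ≤ 1 / 2) :
    ¬ Filter.Tendsto
        (fun n : ℕ => (-1 : ℝ) ^ n * (r3 n : ℝ) / (a ^ 2 + (n : ℝ)) ^ s)
        Filter.atTop (nhds 0) ∧
      ∀ L : ℝ, ¬ Filter.Tendsto
        (fun N : ℕ => ∑ n ∈ Finset.Icc 1 N, (-1 : ℝ) ^ n * (r3 n : ℝ) / (a ^ 2 + (n : ℝ)) ^ s)
        Filter.atTop (nhds L) :=
  madelung_spheres_diverges_general a s hs
end

section
/- Let 0 < s < 1 and let g : ℝ³ \ {0} → ℝ be given by g(y) = |y|^{2s-3}. For every x ∈ [0, 2π]³ there is a constant C > 0 (depending on s and x) such that for all (n,k,l) ∈ ℤ³ with n² + k² + l² ≥ 4, | ∑_{(ε₁,ε₂,ε₃) ∈ {-1,1}³} g(2π n + ε₁ x₁, 2π k + ε₂ x₂, 2π l + ε₃ x₃) - 8 g(2π n, 2π k, 2π l) | ≤ C (n² + k² + l²)^{s - 5/2}. In particular, since s - 5/2 < -3/2, these grouped terms form an absolutely summable family over (n,k,l) ∈ ℤ³ with n²+k²+l²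 ≥ 4. -/
open scoped BigOperators Real

/-- The power kernel `g(y) = |y|^{2s-3}` on `ℝ³ \ {0}` (written in coordinates). -/
noncomputable def powKernel (s y₁ y₂ y₃ : ℝ) : ℝ :=
  Real.sqrt (y₁ ^ 2 + y₂ ^ 2 + y₃ ^ 2) ^ (2 * s - 3)

/-- The grouped sum `∑_{ε ∈ {-1,1}³} g(2πn + ε₁x₁, 2πk + ε₂x₂, 2πl + ε₃x₃) - 8 g(2πn,2πk,2πl)`. -/
noncomputable def groupedTerm (s x₁ x₂ x₃ : ℝ) (n k l : ℤ) : ℝ :=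
  (∑ ε ∈ (({-1, 1} : Finset ℝ) ×ˢ ({-1, 1} : Finset ℝ) ×ˢ ({-1, 1} : Finset ℝ)),
      powKernel s (2 * π * n + ε.1 * x₁) (2 * π * k + ε.2.1 * x₂) (2 * π * l + ε.2.2 * x₃)) -
    8 * powKernel s (2 * π * n) (2 * π * k) (2 * π * l)

open Real Set Finset

/-!
With `Sᵢφ(y) = φ(y + xᵢeᵢ) + φ(y - xᵢeᵢ)` and `Δᵢ = Sᵢ - 2`, the grouped term is
`(S₁S₂S₃ - 8) g (a) = (Δ₁S₂S₃ + 2 Δ₂S₃ + 4 Δ₃) g (a)` with `a = 2π(n,k,l)`: a combination of total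
weight 12 of symmetric second differences of `g` along coordinate segments in the cube
`a + [-2π, 2π]³`. Since `|a| ≥ 4π`, every point `y` of that cube has `|y|² ≥ |a|²/80`, so the second
derivative of `u ↦ (A + u²)^{s-3/2}` bounds each second difference by `O(|a|^{2s-5})`. As
`2s - 5 < -3`, the bound is summable over `ℤ³`, by comparison with a product of three
one-dimensional series.
-/

theorem abs_add_sub_two_mul_le_of_hasDerivAt {φ φ' φ'' : ℝ → ℝ} {c t M : ℝ} (ht : 0 ≤ t)
    (hφ : ∀ u ∈ Icc (c - t) (c + t), HasDerivAt φ (φ' u) u)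
    (hφ' : ∀ u ∈ Icc (c - t) (c + t), HasDerivAt φ' (φ'' u) u)
    (hM : ∀ u ∈ Icc (c - t) (c + t), |φ'' u| ≤ M) :
    |φ (c + t) + φ (c - t) - 2 * φ c| ≤ 2 * M * t ^ 2 := by
  have hplus : ∀ τ ∈ Icc 0 t, c + τ ∈ Icc (c - t) (c + t) := fun τ hτ =>
    ⟨by linarith [hτ.1], by linarith [hτ.2]⟩
  have hminus : ∀ τ ∈ Icc 0 t, c - τ ∈ Icc (c - t) (c + t) := fun τ hτ =>
    ⟨by linarith [hτ.2], by linarith [hτ.1]⟩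
  have hderiv : ∀ τ ∈ Icc 0 t, HasDerivAt (fun τ => φ (c + τ) + φ (c - τ) - 2 * φ c)
      (φ' (c + τ) - φ' (c - τ)) τ := by
    intro τ hτ
    have hp := (hφ _ (hplus τ hτ)).comp τ ((hasDerivAt_id τ).const_add c)
    have hm := (hφ _ (hminus τ hτ)).comp τ ((hasDerivAt_id τ).const_sub c)
    simpa [sub_eq_add_neg] using (hp.add hm).sub_const (2 * φ c)
  have hbound : ∀ τ ∈ Icc 0 t, ‖φ' (c + τ) - φ' (c - τ)‖ ≤ 2 * M * t := by
    intro τ hτ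
    have hlip := (convex_Icc (c - t) (c + t)).norm_image_sub_le_of_norm_hasDerivWithin_le
      (fun u hu => (hφ' u hu).hasDerivWithinAt) (fun u hu => hM u hu) (hminus τ hτ) (hplus τ hτ)
    have hM0 : 0 ≤ M := (abs_nonneg _).trans (hM c ⟨by linarith, by linarith⟩)
    rw [show c + τ - (c - τ) = 2 * τ by ring,
      Real.norm_of_nonneg (by linarith [hτ.1] : 0 ≤ 2 * τ)] at hlip
    nlinarith [hτ.2]
  have key := (convex_Icc 0 t).norm_image_sub_le_of_norm_hasDerivWithin_le
    (fun τ hτ => (hderiv τ hτ).hasDerivWithinAt) hbound (left_mem_Icc.2 ht) (right_mem_Icc.2 ht)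
  rw [add_zero, sub_zero, show φ c + φ c - 2 * φ c = 0 by ring, sub_zero, Real.norm_eq_abs,
    sub_zero, Real.norm_of_nonneg ht] at key
  linarith

theorem hasDerivAt_add_sq_rpow (A q u : ℝ) (h : 0 < A + u ^ 2) :
    HasDerivAt (fun v => (A + v ^ 2) ^ q) (2 * q * u * (A + u ^ 2) ^ (q - 1)) u := by
  have hsq : HasDerivAt (fun v => A + v ^ 2) (2 * u) u := by
    simpa using (hasDerivAt_pow 2 u).const_add A
  convert hsq.rpow_const (p := q) (Or.inl h.ne') using 1
  ring

theorem abs_deriv2_add_sq_rpow_le {A q u m : ℝ} (hA : 0 ≤ A) (hq : q ≤ 0) (hm : 0 < m)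
    (hmu : m ≤ A + u ^ 2) :
    |2 * q * (A + u ^ 2) ^ (q - 1) + 2 * q * u * (2 * (q - 1) * u * (A + u ^ 2) ^ (q - 1 - 1))|
      ≤ 2 * |q| * (1 - 2 * q) * m ^ (q - 1) := by
  set X := A + u ^ 2
  have hX : 0 < X := hm.trans_le hmu
  have hfactor : 2 * q * X ^ (q - 1) + 2 * q * u * (2 * (q - 1) * u * X ^ (q - 1 - 1))
      = 2 * q * X ^ (q - 1) * ((X + 2 * (q - 1) * u ^ 2) / X) := by
    rw [rpow_sub_one hX.ne' (q - 1)]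
    field_simp
  have hratio : |(X + 2 * (q - 1) * u ^ 2) / X| ≤ 1 - 2 * q := by
    rw [abs_div, abs_of_pos hX, div_le_iff₀ hX, abs_le]
    have hu : u ^ 2 ≤ X := by simp [X, hA]
    constructor <;> nlinarith [sq_nonneg u]
  calc _ = 2 * |q| * X ^ (q - 1) * |(X + 2 * (q - 1) * u ^ 2) / X| := by
        rw [hfactor, abs_mul, abs_mul, abs_mul, abs_two, abs_of_pos (rpow_pos_of_pos hX _)]
    _ ≤ 2 * |q| * m ^ (q - 1) * (1 - 2 * q) := by
        have hpow : X ^ (q - 1) ≤ m ^ (q - 1) := rpow_le_rpow_of_nonpos hm hmu (by linarith)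
        have := rpow_nonneg hm.le (q - 1)
        gcongr
    _ = _ := by ring

theorem abs_add_sq_rpow_secondDiff_le {A q c t m : ℝ} (hA : 0 ≤ A) (hq : q ≤ 0) (ht : 0 ≤ t)
    (hm : 0 < m) (hmu : ∀ u ∈ Icc (c - t) (c + t), m ≤ A + u ^ 2) :
    |(A + (c + t) ^ 2) ^ q + (A + (c - t) ^ 2) ^ q - 2 * (A + c ^ 2) ^ q|
      ≤ 4 * |q| * (1 - 2 * q) * m ^ (q - 1) * t ^ 2 := by
  have hpos : ∀ u ∈ Icc (c - t) (c + t), 0 < A + u ^ 2 := fun u hu => hm.trans_le (hmu u hu)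
  have h := abs_add_sub_two_mul_le_of_hasDerivAt (φ := fun u => (A + u ^ 2) ^ q) ht
    (fun u hu => hasDerivAt_add_sq_rpow A q u (hpos u hu))
    (fun u hu => ((hasDerivAt_id u).const_mul (2 * q)).mul
      (hasDerivAt_add_sq_rpow A (q - 1) u (hpos u hu)) |>.congr_deriv (by simp only [mul_one, id]))
    (fun u hu => abs_deriv2_add_sq_rpow_le hA hq hm (hmu u hu))
  convert h using 1
  ring

theorem sum_signs_cube_sub_eq (f : ℝ → ℝ → ℝ → ℝ) (a b c x y z : ℝ) :
    ∑ ε ∈ ({-1, 1} : Finset ℝ) ×ˢ ({-1, 1} : Finset ℝ) ×ˢ ({-1, 1} : Finset ℝ),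
        f (a + ε.1 * x) (b + ε.2.1 * y) (c + ε.2.2 * z) - 8 * f a b c =
      ∑ ε ∈ ({-1, 1} : Finset ℝ) ×ˢ ({-1, 1} : Finset ℝ),
          (f (a + x) (b + ε.1 * y) (c + ε.2 * z) + f (a - x) (b + ε.1 * y) (c + ε.2 * z)
            - 2 * f a (b + ε.1 * y) (c + ε.2 * z)) +
        2 * ∑ ε ∈ ({-1, 1} : Finset ℝ),
          (f a (b + y) (c + ε * z) + f a (b - y) (c + ε * z) - 2 * f a b (c + ε * z)) +
        4 * (f a b (c + z) + f a b (c - z) - 2 * f a b c) := by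
  simp only [sum_product, sum_pair (show (-1 : ℝ) ≠ 1 by norm_num), neg_mul, one_mul,
    ← sub_eq_add_neg]
  ring

theorem abs_sum_signs_cube_sub_le (f : ℝ → ℝ → ℝ → ℝ) (a b c x y z β : ℝ)
    (h₁ : ∀ ε ∈ ({-1, 1} : Finset ℝ) ×ˢ ({-1, 1} : Finset ℝ),
      |f (a + x) (b + ε.1 * y) (c + ε.2 * z) + f (a - x) (b + ε.1 * y) (c + ε.2 * z)
        - 2 * f a (b + ε.1 * y) (c + ε.2 * z)| ≤ β)
    (h₂ : ∀ ε ∈ ({-1, 1} : Finset ℝ),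
      |f a (b + y) (c + ε * z) + f a (b - y) (c + ε * z) - 2 * f a b (c + ε * z)| ≤ β)
    (h₃ : |f a b (c + z) + f a b (c - z) - 2 * f a b c| ≤ β) :
    |∑ ε ∈ ({-1, 1} : Finset ℝ) ×ˢ ({-1, 1} : Finset ℝ) ×ˢ ({-1, 1} : Finset ℝ),
        f (a + ε.1 * x) (b + ε.2.1 * y) (c + ε.2.2 * z) - 8 * f a b c| ≤ 12 * β := by
  have hcard : ({-1, 1} : Finset ℝ).card = 2 := card_pair (by norm_num)
  have hsum₁ := (abs_sum_le_sum_abs _ _).trans (sum_le_card_nsmul _ _ _ h₁)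
  have hsum₂ := (abs_sum_le_sum_abs _ _).trans (sum_le_card_nsmul _ _ _ h₂)
  rw [card_product, hcard, nsmul_eq_mul] at hsum₁
  rw [hcard, nsmul_eq_mul] at hsum₂
  rw [sum_signs_cube_sub_eq]
  refine (abs_add_le _ _).trans ?_
  grw [abs_add_le, abs_mul, abs_mul, h₃, hsum₁, hsum₂]
  norm_num
  linarith

theorem pi_sq_div_twenty_mul_le_sq_add_sq_add_sq {n k l u v w : ℝ} (hR : 4 ≤ n ^ 2 + k ^ 2 + l ^ 2)
    (hu : |u - 2 * π * n| ≤ 2 * π) (hv : |v - 2 * π * k| ≤ 2 * π) (hw : |w - 2 * π * l| ≤ 2 * π) :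
    π ^ 2 / 20 * (n ^ 2 + k ^ 2 + l ^ 2) ≤ u ^ 2 + v ^ 2 + w ^ 2 := by
  have hsq : ∀ {d : ℝ}, |d| ≤ 2 * π → d ^ 2 ≤ 4 * π ^ 2 := fun {d} hd => by
    nlinarith [sq_abs d, abs_nonneg d]
  have := hsq hu; have := hsq hv; have := hsq hw
  -- `(a + d)² ≥ a²/5 - d²/4` is `(4a + 5d)² ≥ 0`
  nlinarith [sq_nonneg (8 * π * n + 5 * (u - 2 * π * n)),
    sq_nonneg (8 * π * k + 5 * (v - 2 * π * k)), sq_nonneg (8 * π * l + 5 * (w - 2 * π * l)),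
    mul_nonneg (sq_nonneg π) (sub_nonneg.2 hR)]

theorem powKernel_eq (s u v w : ℝ) : powKernel s u v w = (u ^ 2 + v ^ 2 + w ^ 2) ^ (s - 3 / 2) := by
  rw [powKernel, sqrt_eq_rpow, ← rpow_mul (by positivity)]
  ring_nf

theorem abs_mul_of_mem_signs {ε : ℝ} (hε : ε ∈ ({-1, 1} : Finset ℝ)) (y : ℝ) : |ε * y| = |y| := by
  rcases mem_insert.1 hε with rfl | hε
  · simp
  · rw [mem_singleton.1 hε, one_mul]

theorem abs_groupedTerm_le_of_secondDiff_le {s x₁ x₂ x₃ m β : ℝ} (hx₁ : x₁ ∈ Icc 0 (2 * π))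
    (hx₂ : x₂ ∈ Icc 0 (2 * π)) (hx₃ : x₃ ∈ Icc 0 (2 * π)) {n k l : ℤ}
    (hlow : ∀ u v w : ℝ, |u - 2 * π * n| ≤ 2 * π → |v - 2 * π * k| ≤ 2 * π →
      |w - 2 * π * l| ≤ 2 * π → m ≤ u ^ 2 + v ^ 2 + w ^ 2)
    (hsecond : ∀ {A c t : ℝ}, 0 ≤ A → t ∈ Icc 0 (2 * π) →
      (∀ u ∈ Icc (c - t) (c + t), m ≤ A + u ^ 2) →
      |(A + (c + t) ^ 2) ^ (s - 3 / 2) + (A + (c - t) ^ 2) ^ (s - 3 / 2)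
        - 2 * (A + c ^ 2) ^ (s - 3 / 2)| ≤ β) :
    |groupedTerm s x₁ x₂ x₃ n k l| ≤ 12 * β := by
  have hsegment : ∀ {c t u : ℝ}, t ∈ Icc 0 (2 * π) → u ∈ Icc (c - t) (c + t) →
      |u - c| ≤ 2 * π := fun ht hu =>
    abs_sub_le_iff.2 ⟨by linarith [hu.2, ht.2], by linarith [hu.1, ht.2]⟩
  have hsign : ∀ {c ε t : ℝ}, ε ∈ ({-1, 1} : Finset ℝ) → t ∈ Icc 0 (2 * π) →
      |c + ε * t - c| ≤ 2 * π := fun hε ht => by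
    rw [add_sub_cancel_left, abs_mul_of_mem_signs hε, abs_of_nonneg ht.1]; exact ht.2
  have hcenter : ∀ c : ℝ, |c - c| ≤ 2 * π := fun c => by
    rw [sub_self, abs_zero]; positivity
  simp only [groupedTerm, powKernel_eq]
  apply abs_sum_signs_cube_sub_le (fun u v w => (u ^ 2 + v ^ 2 + w ^ 2) ^ (s - 3 / 2))
  · rintro ⟨ε₂, ε₃⟩ hε
    obtain ⟨hε₂, hε₃⟩ := mem_product.1 hε
    dsimp only
    convert hsecond (A := (2 * π * k + ε₂ * x₂) ^ 2 + (2 * π * l + ε₃ * x₃) ^ 2) (by positivity) hx₁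
      (fun u hu => by
        linarith [hlow _ _ _ (hsegment hx₁ hu) (hsign hε₂ hx₂) (hsign hε₃ hx₃)]) using 5 <;> ring
  · intro ε₃ hε₃
    convert hsecond (A := (2 * π * n) ^ 2 + (2 * π * l + ε₃ * x₃) ^ 2) (by positivity) hx₂
      (fun u hu => by
        linarith [hlow _ _ _ (hcenter _) (hsegment hx₂ hu) (hsign hε₃ hx₃)]) using 5 <;> ring
  · exact hsecond (by positivity) hx₃ fun u hu =>
      hlow _ _ _ (hcenter _) (hcenter _) (hsegment hx₃ hu)

theorem abs_groupedTerm_le {s x₁ x₂ x₃ : ℝ} (hs : s < 1) (hx₁ : x₁ ∈ Icc 0 (2 * π))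
    (hx₂ : x₂ ∈ Icc 0 (2 * π)) (hx₃ : x₃ ∈ Icc 0 (2 * π)) {n k l : ℤ}
    (hR : 4 ≤ n ^ 2 + k ^ 2 + l ^ 2) :
    |groupedTerm s x₁ x₂ x₃ n k l| ≤
      48 * |s - 3 / 2| * (4 - 2 * s) * (π ^ 2 / 20) ^ (s - 5 / 2) * (2 * π) ^ 2 *
        ((n : ℝ) ^ 2 + (k : ℝ) ^ 2 + (l : ℝ) ^ 2) ^ (s - 5 / 2) := by
  set q := s - 3 / 2 with hq
  set R := (n : ℝ) ^ 2 + (k : ℝ) ^ 2 + (l : ℝ) ^ 2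
  set m := π ^ 2 / 20 * R
  have hR' : 4 ≤ R := by simp only [R]; exact_mod_cast hR
  have hm : 0 < m := by positivity
  have hsecond : ∀ {A c t : ℝ}, 0 ≤ A → t ∈ Icc 0 (2 * π) →
      (∀ u ∈ Icc (c - t) (c + t), m ≤ A + u ^ 2) →
      |(A + (c + t) ^ 2) ^ q + (A + (c - t) ^ 2) ^ q - 2 * (A + c ^ 2) ^ q|
        ≤ 4 * |q| * (1 - 2 * q) * m ^ (q - 1) * (2 * π) ^ 2 := fun hA ht hmu => by
    refine (abs_add_sq_rpow_secondDiff_le hA (by linarith) ht.1 hm hmu).trans ?_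
    have := rpow_nonneg hm.le (q - 1)
    have := pow_le_pow_left₀ ht.1 ht.2 2
    have : 0 ≤ 1 - 2 * q := by linarith
    gcongr
  refine (abs_groupedTerm_le_of_secondDiff_le hx₁ hx₂ hx₃
    (fun _ _ _ => pi_sq_div_twenty_mul_le_sq_add_sq_add_sq hR') hsecond).trans (le_of_eq ?_)
  rw [mul_rpow (by positivity) (by positivity), show q - 1 = s - 5 / 2 by ring]
  ring

theorem summable_int_sq_add_one_rpow {p : ℝ} (hp : p < -1 / 2) :
    Summable fun j : ℤ => ((j : ℝ) ^ 2 + 1) ^ p := by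
  refine Summable.of_norm_bounded_eventually (summable_abs_int_rpow (b := -(2 * p)) (by linarith))
    ((Filter.eventually_cofinite_ne 0).mono fun j hj => ?_)
  have hj' : (0 : ℝ) < (j : ℝ) ^ 2 := by positivity
  rw [Real.norm_of_nonneg (by positivity), neg_neg, rpow_mul (abs_nonneg _), rpow_two, sq_abs]
  exact rpow_le_rpow_of_nonpos hj' (by linarith) (by linarith)

theorem summable_sum_sq_rpow {p : ℝ} (hp : p < -3 / 2) :
    Summable fun v : ℤ × ℤ × ℤ => ((v.1 : ℝ) ^ 2 + (v.2.1 : ℝ) ^ 2 + (v.2.2 : ℝ) ^ 2) ^ p := by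
  have h1 := summable_int_sq_add_one_rpow (p := p / 3) (by linarith)
  have hnn : 0 ≤ fun j : ℤ => ((j : ℝ) ^ 2 + 1) ^ (p / 3) := fun j => by positivity
  have hprod := h1.mul_of_nonneg (h1.mul_of_nonneg h1 hnn hnn) hnn
    (fun v => by positivity)
  refine Summable.of_norm_bounded_eventually (hprod.mul_left (2 ^ (-p)))
    ((Filter.eventually_cofinite_ne 0).mono fun v hv => ?_)
  obtain ⟨a, b, c⟩ := v
  set R := (a : ℝ) ^ 2 + (b : ℝ) ^ 2 + (c : ℝ) ^ 2
  have hR : 1 ≤ R := by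
    have : (1 : ℤ) ≤ a ^ 2 + b ^ 2 + c ^ 2 := by
      simp only [ne_eq, Prod.mk_eq_zero, not_and_or] at hv
      rcases hv with h | h | h <;>
        nlinarith [sq_pos_of_ne_zero h, sq_nonneg a, sq_nonneg b, sq_nonneg c]
    simp only [R]; exact_mod_cast this
  have hfactor : ∀ j : ℤ, (j : ℝ) ^ 2 ≤ R → (2 * R) ^ (p / 3) ≤ ((j : ℝ) ^ 2 + 1) ^ (p / 3) :=
    fun j hj => rpow_le_rpow_of_nonpos (by positivity) (by linarith) (by linarith)
  have hcube : (2 * R) ^ (p / 3) * ((2 * R) ^ (p / 3) * (2 * R) ^ (p / 3)) = 2 ^ p * R ^ p := by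
    rw [← rpow_add (by positivity), ← rpow_add (by positivity), ← mul_rpow (by norm_num)
      (by positivity)]
    ring_nf
  have h2 : (2 : ℝ) ^ (-p) * 2 ^ p = 1 := by
    rw [← rpow_add (by norm_num), neg_add_cancel, rpow_zero]
  have := rpow_nonneg (show (0 : ℝ) ≤ 2 * R by positivity) (p / 3)
  calc ‖R ^ p‖ = 2 ^ (-p) * ((2 * R) ^ (p / 3) * ((2 * R) ^ (p / 3) * (2 * R) ^ (p / 3))) := by
        rw [Real.norm_of_nonneg (by positivity), hcube, ← mul_assoc, h2, one_mul]
    _ ≤ _ := by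
        gcongr _ * (?_ * (?_ * ?_)) <;> apply hfactor <;> simp only [R] <;>
          nlinarith [sq_nonneg (a : ℝ), sq_nonneg (b : ℝ), sq_nonneg (c : ℝ)]

theorem grouped_term_bound_general (s : ℝ) (hs1 : s < 1) (x₁ x₂ x₃ : ℝ)
    (hx₁ : x₁ ∈ Set.Icc (0 : ℝ) (2 * π)) (hx₂ : x₂ ∈ Set.Icc (0 : ℝ) (2 * π))
    (hx₃ : x₃ ∈ Set.Icc (0 : ℝ) (2 * π)) :
    (∃ C > (0 : ℝ), ∀ n k l : ℤ, 4 ≤ n ^ 2 + k ^ 2 + l ^ 2 →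
        |groupedTerm s x₁ x₂ x₃ n k l| ≤
          C * ((n : ℝ) ^ 2 + (k : ℝ) ^ 2 + (l : ℝ) ^ 2) ^ (s - 5 / 2)) ∧
      Summable (fun q : {q : ℤ × ℤ × ℤ // 4 ≤ q.1 ^ 2 + q.2.1 ^ 2 + q.2.2 ^ 2} =>
        |groupedTerm s x₁ x₂ x₃ (q : ℤ × ℤ × ℤ).1 (q : ℤ × ℤ × ℤ).2.1 (q : ℤ × ℤ × ℤ).2.2|) := by
  have hC : 0 < 48 * |s - 3 / 2| * (4 - 2 * s) * (π ^ 2 / 20) ^ (s - 5 / 2) * (2 * π) ^ 2 := by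
    have : 0 < |s - 3 / 2| := abs_pos.2 (by linarith)
    have : 0 < 4 - 2 * s := by linarith
    positivity
  have hbound := fun (n k l : ℤ) (hR : 4 ≤ n ^ 2 + k ^ 2 + l ^ 2) =>
    abs_groupedTerm_le hs1 hx₁ hx₂ hx₃ hR
  refine ⟨⟨_, hC, hbound⟩, ?_⟩
  exact .of_nonneg_of_le (fun _ => abs_nonneg _) (fun v => hbound _ _ _ v.2)
    (((summable_sum_sq_rpow (p := s - 5 / 2) (by linarith)).mul_left _).subtype _)

/-- For `0 < s < 1`, `g(y) = |y|^{2s-3}` and `x ∈ [0,2π]³`, there is `C > 0` such that for all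
`(n,k,l) ∈ ℤ³` with `n²+k²+l² ≥ 4`,
`|∑_{ε ∈ {-1,1}³} g(2πn + ε₁x₁, 2πk + ε₂x₂, 2πl + ε₃x₃) - 8g(2πn,2πk,2πl)|
  ≤ C (n²+k²+l²)^{s-5/2}`; in particular (as `s - 5/2 < -3/2`) the grouped terms form an
absolutely summable family over `{(n,k,l) : n²+k²+l² ≥ 4}`. -/
theorem grouped_term_bound (s : ℝ) (hs0 : 0 < s) (hs1 : s < 1) (x₁ x₂ x₃ : ℝ)
    (hx₁ : x₁ ∈ Set.Icc (0 : ℝ) (2 * π)) (hx₂ : x₂ ∈ Set.Icc (0 : ℝ) (2 * π))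
    (hx₃ : x₃ ∈ Set.Icc (0 : ℝ) (2 * π)) :
    (∃ C > (0 : ℝ), ∀ n k l : ℤ, 4 ≤ n ^ 2 + k ^ 2 + l ^ 2 →
        |groupedTerm s x₁ x₂ x₃ n k l| ≤
          C * ((n : ℝ) ^ 2 + (k : ℝ) ^ 2 + (l : ℝ) ^ 2) ^ (s - 5 / 2)) ∧
      Summable (fun q : {q : ℤ × ℤ × ℤ // 4 ≤ q.1 ^ 2 + q.2.1 ^ 2 + q.2.2 ^ 2} =>
        |groupedTerm s x₁ x₂ x₃ (q : ℤ × ℤ × ℤ).1 (q : ℤ × ℤ × ℤ).2.1 (q : ℤ × ℤ × ℤ).2.2|) :=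
  grouped_term_bound_general s hs1 x₁ x₂ x₃ hx₁ hx₂ hx₃
end
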